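/- arXiv:2601.05041 — 3 statements merged into one kernel-verified Lean document; each statement's English description precedes it below -/
import Mathlib

section
/- Let d ≥ 3 and c ∈ ℝ, let ξ be a 1-form and H an alternating 3-form on V with tangential–normal decompositions ξ = ξ∥ − x·N♭ and H = H∥ − N♭ ∧ h (all tangential parts annihilated by i_N, so x = ξ(N)). Define T := (1/(d−2))·[ξ⊗ξ − (|ξ|²_g/2)·g] + (c/4)·[H² − (|H|²_g/6)·g]. Then T(N,N) = (1/(2(d−2)))·(|ξ∥|²_{g_W} + x²) + (c/24)·(|H∥|²_{g_W} + 3|h|²_{g_W}). (This is the algebraic content of the Hamiltonian constraint of the Einstein-frame generalised Einstein equations.) -/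
/-!
Write `⟨ω, η⟩` for the full contraction of two `k`-tensors with `g⁻¹` in every slot. Since `g⁻¹`
raises `N♭` to `N`, contracting a wedge `N♭ ∧ w` against an alternating form `η` of degree `k + 1`
gives `(k + 1) ⟨w, i_N η⟩`. As `i_N H∥ = 0`, `i_N h = 0` and `g(N, N) = -1`, one gets `i_N H = h`,
hence `|H|² = |H∥|² - 3 |h|²` and `H²(N, N) = |i_N H|² = |h|²`; likewise `ξ(N) = x` and
`|ξ|² = |ξ∥|² - x²`. Tangential tensors have the same norm for `g⁻¹` and `g_W⁻¹ = g⁻¹ + N ⊗ N`,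
so substituting into `T(N, N)` leaves an identity between rational expressions.
-/

open scoped BigOperators

namespace GEE

/-- Components (in a fixed basis) of a covariant `k`-tensor on a `d`-dimensional
real vector space. -/
abbrev Tensor (d k : ℕ) : Type := (Fin k → Fin d) → ℝ

/-- The component tensor `ω` is alternating (totally antisymmetric). -/
def IsAlt {d k : ℕ} (ω : Tensor d k) : Prop :=
  ∀ (v : Fin k → Fin d) (σ : Equiv.Perm (Fin k)),
    ω (v ∘ σ) = ((Equiv.Perm.sign σ : ℤ) : ℝ) * ω v

/-- The Minkowski matrix `diag(-1, 1, …, 1)`. -/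
def mink (d : ℕ) : Matrix (Fin d) (Fin d) ℝ :=
  Matrix.diagonal fun i => if (i : ℕ) = 0 then (-1 : ℝ) else 1

/-- `g` is a symmetric bilinear form of Lorentzian signature `(−,+,…,+)`. -/
def IsLorentzian {d : ℕ} (g : Matrix (Fin d) (Fin d) ℝ) : Prop :=
  g.IsSymm ∧ ∃ P : Matrix (Fin d) (Fin d) ℝ, IsUnit P.det ∧ g = P.transpose * mink d * P

/-- Evaluation of a bilinear form (given by its component matrix `A`) on two vectors. -/
def evalBilin {d : ℕ} (A : Matrix (Fin d) (Fin d) ℝ) (X Y : Fin d → ℝ) : ℝ :=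
  ∑ μ, ∑ ν, X μ * A μ ν * Y ν

/-- Interior product `i_N ω`: contraction of the first slot of `ω` with the vector `N`. -/
def iprod {d k : ℕ} (N : Fin d → ℝ) (ω : Tensor d (k + 1)) : Tensor d k :=
  fun v => ∑ μ, N μ * ω (Fin.cons μ v)

/-- `ω` is tangential: contracting `N` into any slot yields zero.  For alternating
tensors this is equivalent to `i_N ω = 0` (vanishing of the first-slot contraction),
and for `k = 0` the condition is vacuous. -/
def Tangential {d k : ℕ} (N : Fin d → ℝ) (ω : Tensor d k) : Prop :=
  ∀ (i : Fin k) (v : Fin k → Fin d), ∑ μ, N μ * ω (Function.update v i μ) = 0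

/-- The flat `N♭ = g(N,·)` of a vector `N`, i.e. `(N♭)_μ = g_{μν} N^ν`. -/
def flat {d : ℕ} (g : Matrix (Fin d) (Fin d) ℝ) (N : Fin d → ℝ) : Fin d → ℝ :=
  fun μ => ∑ ν, g μ ν * N ν

/-- Wedge product `α ∧ w` of a 1-form `α` with a `k`-form `w`, in components. -/
def wedge1 {d k : ℕ} (α : Fin d → ℝ) (w : Tensor d k) : Tensor d (k + 1) :=
  fun v => ∑ i : Fin (k + 1), (-1 : ℝ) ^ (i : ℕ) * α (v i) * w (v ∘ i.succAbove)

/-- Full contraction `|ω|² = ω_{μ₁…μ_k} ω^{μ₁…μ_k}`, all indices raised with `minv`. -/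
def normSq {d k : ℕ} (minv : Matrix (Fin d) (Fin d) ℝ) (ω : Tensor d k) : ℝ :=
  ∑ v : Fin k → Fin d, ∑ w : Fin k → Fin d, (∏ i, minv (v i) (w i)) * ω v * ω w

/-- `|α|² = minv^{μν} α_μ α_ν` for a 1-form `α`. -/
def oneNormSq {d : ℕ} (minv : Matrix (Fin d) (Fin d) ℝ) (α : Fin d → ℝ) : ℝ :=
  ∑ μ, ∑ ν, minv μ ν * α μ * α ν

/-- The inverse of the induced Riemannian metric `g_W` on `W = N^⊥` (for a unit
timelike `N`), pushed forward to the ambient space: `g_W^{μν} = g^{μν} + N^μ N^ν`.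
Contracting tangential tensors with this matrix computes their full `g_W`-contraction. -/
noncomputable def ginvW {d : ℕ} (g : Matrix (Fin d) (Fin d) ℝ) (N : Fin d → ℝ) :
    Matrix (Fin d) (Fin d) ℝ :=
  g⁻¹ + Matrix.vecMulVec N N

/-- `H²_{μν} = ginv^{κλ} ginv^{ωπ} H_{μκω} H_{νλπ}` for a 3-form `H`. -/
def Hsq {d : ℕ} (ginv : Matrix (Fin d) (Fin d) ℝ) (H : Tensor d 3) :
    Matrix (Fin d) (Fin d) ℝ :=
  Matrix.of fun μ ν => ∑ κ, ∑ l, ∑ o, ∑ p,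
    ginv κ l * ginv o p * H ![μ, κ, o] * H ![ν, l, p]

/-- `tr_g A = ginv^{μν} A_{μν}`. -/
def trWith {d : ℕ} (ginv A : Matrix (Fin d) (Fin d) ℝ) : ℝ :=
  ∑ μ, ∑ ν, ginv μ ν * A μ ν

/-- `C(h,H)_i = gWinv^{kl} gWinv^{mn} h_{km} H_{lni}`. -/
def Ccontr {d : ℕ} (gWinv : Matrix (Fin d) (Fin d) ℝ) (h : Tensor d 2)
    (H : Tensor d 3) : Fin d → ℝ :=
  fun i => ∑ k, ∑ l, ∑ m, ∑ n, gWinv k l * gWinv m n * h ![k, m] * H ![l, n, i]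

/-- Partial derivative `∂_μ f` at `x` of a scalar field on `ℝ^d`. -/
noncomputable def pder {d : ℕ} (μ : Fin d) (f : (Fin d → ℝ) → ℝ) (x : Fin d → ℝ) : ℝ :=
  fderiv ℝ f x (Pi.single μ 1)

open Matrix

section OneForms

variable {d : ℕ} {M : Matrix (Fin d) (Fin d) ℝ}

theorem evalBilin_eq_dotProduct (A : Matrix (Fin d) (Fin d) ℝ) (X Y : Fin d → ℝ) :
    evalBilin A X Y = X ⬝ᵥ (A *ᵥ Y) := by
  simp only [evalBilin, dotProduct, mulVec, Finset.mul_sum, mul_assoc]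

theorem evalBilin_add (A B : Matrix (Fin d) (Fin d) ℝ) (X Y : Fin d → ℝ) :
    evalBilin (A + B) X Y = evalBilin A X Y + evalBilin B X Y := by
  simp only [evalBilin_eq_dotProduct, add_mulVec, dotProduct_add]

theorem evalBilin_sub (A B : Matrix (Fin d) (Fin d) ℝ) (X Y : Fin d → ℝ) :
    evalBilin (A - B) X Y = evalBilin A X Y - evalBilin B X Y := by
  simp only [evalBilin_eq_dotProduct, sub_mulVec, dotProduct_sub]

theorem evalBilin_smul (r : ℝ) (A : Matrix (Fin d) (Fin d) ℝ) (X Y : Fin d → ℝ) :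
    evalBilin (r • A) X Y = r * evalBilin A X Y := by
  simp only [evalBilin_eq_dotProduct, smul_mulVec, dotProduct_smul, smul_eq_mul]

theorem evalBilin_vecMulVec (u v X Y : Fin d → ℝ) :
    evalBilin (vecMulVec u v) X Y = (X ⬝ᵥ u) * (v ⬝ᵥ Y) := by
  simp only [evalBilin_eq_dotProduct, vecMulVec_mulVec, op_smul_eq_smul, dotProduct_smul,
    smul_eq_mul, mul_comm]

theorem oneNormSq_eq_dotProduct (α : Fin d → ℝ) : oneNormSq M α = α ⬝ᵥ (M *ᵥ α) := by
  simp only [oneNormSq, dotProduct, mulVec, Finset.mul_sum]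
  exact Fintype.sum_congr _ _ fun μ => Fintype.sum_congr _ _ fun ν => by ring

theorem oneNormSq_add_vecMulVec (N α : Fin d → ℝ) :
    oneNormSq (M + vecMulVec N N) α = oneNormSq M α + (N ⬝ᵥ α) ^ 2 := by
  simp only [oneNormSq_eq_dotProduct, add_mulVec, vecMulVec_mulVec, op_smul_eq_smul,
    dotProduct_add, dotProduct_smul, smul_eq_mul, dotProduct_comm α N, sq]

theorem oneNormSq_sub_smul (hM : M.IsSymm) {N α ξ : Fin d → ℝ} (hα : α ᵥ* M = N)
    (hξ : N ⬝ᵥ ξ = 0) (x : ℝ) :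
    oneNormSq M (ξ - x • α) = oneNormSq M ξ + x ^ 2 * (N ⬝ᵥ α) := by
  have hMα : M *ᵥ α = N := by rw [← hα, ← vecMul_transpose, hM.eq]
  have hαξ : α ⬝ᵥ (M *ᵥ ξ) = 0 := by rw [dotProduct_mulVec, hα, hξ]
  simp only [oneNormSq_eq_dotProduct, mulVec_sub, mulVec_smul, hMα, sub_dotProduct,
    dotProduct_sub, smul_dotProduct, dotProduct_smul, smul_eq_mul, hαξ, dotProduct_comm ξ N, hξ,
    dotProduct_comm α N]
  ring

end OneForms

section InteriorProduct

variable {d k : ℕ}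

theorem iprod_eq_sum_smul (N : Fin d → ℝ) (ω : Tensor d (k + 1)) :
    iprod N ω = ∑ a, N a • fun u => ω (Fin.cons a u) := by
  funext u
  simp [iprod, Finset.sum_apply]

theorem iprod_sub (N : Fin d → ℝ) (ω η : Tensor d (k + 1)) :
    iprod N (ω - η) = iprod N ω - iprod N η := by
  funext u
  simp only [iprod, Pi.sub_apply, mul_sub, Finset.sum_sub_distrib]

theorem Tangential.iprod_eq_zero {N : Fin d → ℝ} {ω : Tensor d (k + 1)}
    (hω : Tangential N ω) : iprod N ω = 0 := by
  funext u
  rcases isEmpty_or_nonempty (Fin d) with hd | ⟨⟨a⟩⟩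
  · simp [iprod]
  · simpa only [Fin.update_cons_zero, iprod, Pi.zero_apply] using hω 0 (Fin.cons a u)

theorem Tangential.cons {N : Fin d → ℝ} {ω : Tensor d (k + 1)} (hω : Tangential N ω)
    (a : Fin d) : Tangential N fun u => ω (Fin.cons a u) := fun i u => by
  simpa only [Fin.cons_update] using hω i.succ (Fin.cons a u)

theorem IsAlt.apply_insertNth {ω : Tensor d (k + 1)} (hω : IsAlt ω) (i : Fin (k + 1))
    (a : Fin d) (u : Fin k → Fin d) :
    ω (i.insertNth a u) = (-1) ^ (i : ℕ) * ω (Fin.cons a u) := by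
  have hcycle : (Fin.cons a u : Fin (k + 1) → Fin d) ∘ i.cycleRange = i.insertNth a u := by
    refine (Fin.insertNth_eq_iff.2 ⟨by simp [Fin.cycleRange_self], ?_⟩).symm
    funext j
    simp [Fin.removeNth, Fin.cycleRange_succAbove]
  rw [← hcycle, hω, Fin.sign_cycleRange]
  push_cast
  rfl

theorem IsAlt.tangential {N : Fin d → ℝ} {ω : Tensor d (k + 1)} (hω : IsAlt ω)
    (hN : iprod N ω = 0) : Tangential N ω := by
  intro i v
  have hslot := congrFun hN (i.removeNth v)
  simp only [iprod, Pi.zero_apply] at hslot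
  simp only [← Fin.insertNth_removeNth, hω.apply_insertNth, mul_left_comm _ ((-1 : ℝ) ^ _),
    ← Finset.mul_sum, hslot, mul_zero]

theorem cons_comp_succAbove_succ (a : Fin d) (v : Fin (k + 1) → Fin d) (j : Fin (k + 1)) :
    (Fin.cons a v : Fin (k + 2) → Fin d) ∘ j.succ.succAbove =
      Fin.cons a (v ∘ j.succAbove) := by
  funext l
  cases l using Fin.cases <;> simp

theorem iprod_wedge1 (N α : Fin d → ℝ) (w : Tensor d (k + 1)) :
    iprod N (wedge1 α w) = (N ⬝ᵥ α) • w - wedge1 α (iprod N w) := by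
  funext v
  simp only [iprod, wedge1, Fin.sum_univ_succ (n := k + 1), cons_comp_succAbove_succ,
    Fin.val_zero, pow_zero, one_mul, Fin.cons_zero, Fin.cons_succ, Fin.succAbove_zero,
    Fin.cons_comp_succ, Fin.val_succ, pow_succ, Pi.sub_apply, Pi.smul_apply, smul_eq_mul,
    dotProduct, mul_add, Finset.sum_add_distrib, Finset.mul_sum, Finset.sum_mul]
  rw [Finset.sum_comm (s := Finset.univ) (t := Finset.univ) (f := fun x y => N x * _),
    sub_eq_add_neg, ← Finset.sum_neg_distrib]
  congr 1
  · exact Fintype.sum_congr _ _ fun μ => by ring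
  · refine Fintype.sum_congr _ _ fun j => ?_
    rw [← Finset.sum_neg_distrib]
    exact Fintype.sum_congr _ _ fun μ => by ring

theorem iprod_sub_wedge1 {N α : Fin d → ℝ} {ω : Tensor d (k + 2)} {w : Tensor d (k + 1)}
    (hω : iprod N ω = 0) (hw : iprod N w = 0) :
    iprod N (ω - wedge1 α w) = -(N ⬝ᵥ α) • w := by
  rw [iprod_sub, iprod_wedge1, hω, hw]
  funext v
  simp [wedge1]

end InteriorProduct

def tensorPowMatrix {d : ℕ} (M : Matrix (Fin d) (Fin d) ℝ) (k : ℕ) :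
    Matrix (Fin k → Fin d) (Fin k → Fin d) ℝ :=
  Matrix.of fun v w => ∏ i, M (v i) (w i)

noncomputable def pairing {d : ℕ} (M : Matrix (Fin d) (Fin d) ℝ) (k : ℕ) :
    Tensor d k →ₗ[ℝ] Tensor d k →ₗ[ℝ] ℝ :=
  Matrix.toLinearMap₂' ℝ (tensorPowMatrix M k)

section Pairing

variable {d k : ℕ} {M : Matrix (Fin d) (Fin d) ℝ}

theorem pairing_apply (ω η : Tensor d k) :
    pairing M k ω η = ∑ v, ∑ w, (∏ i, M (v i) (w i)) * ω v * η w := by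
  simp only [pairing, Matrix.toLinearMap₂'_apply, tensorPowMatrix, Matrix.of_apply, smul_eq_mul]
  exact Fintype.sum_congr _ _ fun v => Fintype.sum_congr _ _ fun w => by ring

theorem normSq_eq_pairing (ω : Tensor d k) : normSq M ω = pairing M k ω ω :=
  (pairing_apply ω ω).symm

theorem pairing_comm (hM : M.IsSymm) (ω η : Tensor d k) :
    pairing M k ω η = pairing M k η ω := by
  rw [pairing_apply, pairing_apply, Finset.sum_comm]
  refine Fintype.sum_congr _ _ fun w => Fintype.sum_congr _ _ fun v => ?_
  rw [Fintype.prod_congr _ _ fun i => hM.apply (v i) (w i)]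
  ring

theorem sum_pi_insertNth (i : Fin (k + 1)) (f : (Fin (k + 1) → Fin d) → ℝ) :
    ∑ v, f v = ∑ a, ∑ u, f (i.insertNth a u) := by
  rw [← (Fin.insertNthEquiv (fun _ => Fin d) i).sum_comp, Fintype.sum_prod_type]
  rfl

theorem pairing_eq_sum_insertNth (i : Fin (k + 1)) (ω η : Tensor d (k + 1)) :
    pairing M (k + 1) ω η = ∑ a, ∑ b,
      M a b * pairing M k (fun u => ω (i.insertNth a u)) (fun u => η (i.insertNth b u)) := by
  simp only [pairing_apply, sum_pi_insertNth i, Finset.mul_sum]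
  refine Fintype.sum_congr _ _ fun a => ?_
  rw [Finset.sum_comm]
  refine Fintype.sum_congr _ _ fun u => Fintype.sum_congr _ _ fun b => ?_
  refine Fintype.sum_congr _ _ fun u' => ?_
  rw [Fin.prod_univ_succAbove _ i]
  simp only [Fin.insertNth_apply_same, Fin.insertNth_apply_succAbove]
  ring

theorem pairing_eq_sum_cons (ω η : Tensor d (k + 1)) :
    pairing M (k + 1) ω η = ∑ a, ∑ b,
      M a b * pairing M k (fun u => ω (Fin.cons a u)) (fun u => η (Fin.cons b u)) := by
  simpa only [Fin.insertNth_zero'] using pairing_eq_sum_insertNth 0 ω η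

theorem pairing_add_vecMulVec_of_tangential {N : Fin d → ℝ} :
    ∀ {k : ℕ} {ω : Tensor d k}, Tangential N ω → ∀ η : Tensor d k,
      pairing (M + vecMulVec N N) k ω η = pairing M k ω η
  | 0, ω, _, η => by simp only [pairing_apply, Finset.univ_eq_empty, Finset.prod_empty]
  | k + 1, ω, hω, η => by
    have hnormal : ∑ a, ∑ b, N a * N b *
        pairing M k (fun u => ω (Fin.cons a u)) (fun u => η (Fin.cons b u)) = 0 := by
      rw [Finset.sum_comm]
      calc _ = ∑ b, N b * pairing M k (iprod N ω) (fun u => η (Fin.cons b u)) := by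
            simp only [iprod_eq_sum_smul, map_sum, map_smul, LinearMap.sum_apply,
              LinearMap.smul_apply, smul_eq_mul, Finset.mul_sum]
            exact Fintype.sum_congr _ _ fun b => Fintype.sum_congr _ _ fun a => by ring
        _ = 0 := by simp [hω.iprod_eq_zero]
    simp only [pairing_eq_sum_cons (k := k), pairing_add_vecMulVec_of_tangential (hω.cons _),
      Matrix.add_apply, vecMulVec_apply, add_mul, Finset.sum_add_distrib, hnormal, add_zero]

theorem normSq_ginvW {g : Matrix (Fin d) (Fin d) ℝ} {N : Fin d → ℝ} {ω : Tensor d k}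
    (hω : Tangential N ω) : normSq (ginvW g N) ω = normSq g⁻¹ ω := by
  rw [ginvW, normSq_eq_pairing, normSq_eq_pairing, pairing_add_vecMulVec_of_tangential hω]

theorem pairing_wedge1_left {N α : Fin d → ℝ} (hα : α ᵥ* M = N) (w : Tensor d k)
    {η : Tensor d (k + 1)} (hη : IsAlt η) :
    pairing M (k + 1) (wedge1 α w) η = (k + 1) * pairing M k w (iprod N η) := by
  have hsmul : ∀ (c : ℝ) (f : Tensor d k), (fun u => c * f u) = c • f := fun _ _ => rfl
  -- Split off slot `i`: moving it to the front of `η` costs the sign `(-1) ^ i`, which cancels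
  -- the sign of the `i`-th term of the wedge product.
  have hslot : ∀ i : Fin (k + 1),
      pairing M (k + 1) (fun v => α (v i) * w (v ∘ i.succAbove)) η
        = (-1) ^ (i : ℕ) * pairing M k w (iprod N η) := by
    intro i
    rw [pairing_eq_sum_insertNth i]
    simp only [Fin.insertNth_apply_same, Fin.insertNth_comp_succAbove, hη.apply_insertNth, hsmul,
      map_smul, LinearMap.smul_apply, smul_eq_mul]
    rw [iprod_eq_sum_smul, map_sum, Finset.mul_sum, Finset.sum_comm]
    refine Fintype.sum_congr _ _ fun b => ?_
    simp only [map_smul, ← hα, vecMul, dotProduct, Finset.sum_mul, Finset.mul_sum, smul_eq_mul]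
    exact Fintype.sum_congr _ _ fun a => by ring
  have hwedge : wedge1 α w = ∑ i : Fin (k + 1),
      (-1 : ℝ) ^ (i : ℕ) • fun v => α (v i) * w (v ∘ i.succAbove) := by
    funext v
    simp only [wedge1, Finset.sum_apply, Pi.smul_apply, smul_eq_mul, mul_assoc]
  rw [hwedge, map_sum, LinearMap.sum_apply]
  simp only [map_smul, LinearMap.smul_apply, smul_eq_mul, hslot, ← mul_assoc, ← pow_add,
    ← two_mul, pow_mul, neg_one_sq, one_pow, one_mul, Finset.sum_const, Finset.card_univ,
    Fintype.card_fin, nsmul_eq_mul]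
  push_cast
  ring

theorem normSq_sub_wedge1 (hM : M.IsSymm) {N α : Fin d → ℝ} (hα : α ᵥ* M = N)
    {ω : Tensor d (k + 2)} {w : Tensor d (k + 1)} (hω : IsAlt ω) (hωN : iprod N ω = 0)
    (hwN : iprod N w = 0) (hH : IsAlt (ω - wedge1 α w)) :
    normSq M (ω - wedge1 α w) = normSq M ω + (k + 2) * (N ⬝ᵥ α) * normSq M w := by
  have hcross : pairing M (k + 2) ω (ω - wedge1 α w) = normSq M ω := by
    rw [pairing_comm hM, LinearMap.map_sub₂, pairing_wedge1_left hα w hω, hωN,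
      map_zero, mul_zero, sub_zero, normSq_eq_pairing]
  calc normSq M (ω - wedge1 α w)
      = pairing M (k + 2) ω (ω - wedge1 α w)
          - pairing M (k + 2) (wedge1 α w) (ω - wedge1 α w) := by
        rw [normSq_eq_pairing, LinearMap.map_sub₂]
    _ = normSq M ω + (k + 2) * (N ⬝ᵥ α) * normSq M w := by
        rw [hcross, pairing_wedge1_left hα w hH, iprod_sub_wedge1 hωN hwN, map_smul,
          smul_eq_mul, normSq_eq_pairing w]
        push_cast
        ring

theorem pairing_two (ω η : Tensor d 2) :
    pairing M 2 ω η =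
      ∑ a, ∑ a', ∑ b, ∑ b', M a a' * M b b' * ω ![a, b] * η ![a', b'] := by
  simp only [pairing_eq_sum_cons (k := 1), pairing_eq_sum_cons (k := 0), pairing_apply,
    Finset.univ_unique, Finset.sum_singleton, Finset.mul_sum, Finset.univ_eq_empty,
    Finset.prod_empty, one_mul]
  refine Fintype.sum_congr _ _ fun a => Fintype.sum_congr _ _ fun a' =>
    Fintype.sum_congr _ _ fun b => Fintype.sum_congr _ _ fun b' => ?_
  rw [Subsingleton.elim (default : Fin 0 → Fin d) ![]]
  simp only [mul_assoc]
  rfl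

theorem Hsq_apply_eq_pairing (H : Tensor d 3) (μ ν : Fin d) :
    Hsq M H μ ν = pairing M 2 (fun u => H (Fin.cons μ u)) (fun u => H (Fin.cons ν u)) := by
  rw [pairing_two]
  rfl

theorem evalBilin_Hsq (H : Tensor d 3) (X Y : Fin d → ℝ) :
    evalBilin (Hsq M H) X Y = pairing M 2 (iprod X H) (iprod Y H) := by
  simp only [evalBilin, Hsq_apply_eq_pairing, iprod_eq_sum_smul, map_sum, map_smul,
    LinearMap.sum_apply, LinearMap.smul_apply, smul_eq_mul, Finset.mul_sum]
  rw [Finset.sum_comm]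
  exact Fintype.sum_congr _ _ fun μ => Fintype.sum_congr _ _ fun ν => by ring

end Pairing

theorem hamiltonian_constraint_algebra_general {d : ℕ} (c : ℝ)
    (g : Matrix (Fin d) (Fin d) ℝ) (hg : IsLorentzian g) (hdet : IsUnit g.det)
    (N : Fin d → ℝ) (hN : evalBilin g N N = -1)
    (ξ ξpar : Fin d → ℝ) (x : ℝ)
    (hξtan : (∑ μ, N μ * ξpar μ) = 0)
    (hξdec : ξ = ξpar - x • flat g N)
    (H Hpar : Tensor d 3) (h : Tensor d 2)
    (hH : IsAlt H) (hHpar : IsAlt Hpar)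
    (hHtan : iprod N Hpar = 0) (hhtan : Tangential N h)
    (hHdec : H = Hpar - wedge1 (flat g N) h) :
    let T : Matrix (Fin d) (Fin d) ℝ :=
      (((d : ℝ) - 2)⁻¹) • (Matrix.vecMulVec ξ ξ - (oneNormSq g⁻¹ ξ / 2) • g)
        + (c / 4) • (Hsq g⁻¹ H - (normSq g⁻¹ H / 6) • g)
    evalBilin T N N =
      (1 / (2 * ((d : ℝ) - 2))) * (oneNormSq (ginvW g N) ξpar + x ^ 2)
        + (c / 24) * (normSq (ginvW g N) Hpar + 3 * normSq (ginvW g N) h) := by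
  intro T
  have hξ : N ⬝ᵥ ξpar = 0 := hξtan
  have hNN : N ⬝ᵥ flat g N = -1 := by rwa [evalBilin_eq_dotProduct] at hN
  have hraise : flat g N ᵥ* g⁻¹ = N := by
    change (g *ᵥ N) ᵥ* g⁻¹ = N
    rw [← vecMul_transpose, hg.1.eq, vecMul_vecMul, mul_nonsing_inv _ hdet, vecMul_one]
  have hξN : N ⬝ᵥ ξ = x := by
    rw [hξdec, dotProduct_sub, dotProduct_smul, hξ, hNN, smul_eq_mul]
    ring
  have hξnorm : oneNormSq g⁻¹ ξ = oneNormSq (ginvW g N) ξpar - x ^ 2 := by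
    rw [hξdec, oneNormSq_sub_smul hg.1.inv hraise hξ, ginvW, oneNormSq_add_vecMulVec, hξ, hNN]
    ring
  have hhN : iprod N h = 0 := hhtan.iprod_eq_zero
  have hHN : iprod N H = h := by
    rw [hHdec, iprod_sub_wedge1 hHtan hhN, hNN, neg_neg, one_smul]
  have hHnorm : normSq g⁻¹ H = normSq (ginvW g N) Hpar - 3 * normSq (ginvW g N) h := by
    rw [normSq_ginvW (hHpar.tangential hHtan), normSq_ginvW hhtan, hHdec,
      normSq_sub_wedge1 hg.1.inv hraise hHpar hHtan hhN (hHdec ▸ hH), hNN]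
    push_cast
    ring
  rw [one_div, mul_inv]
  simp only [T, evalBilin_add, evalBilin_smul, evalBilin_sub, evalBilin_vecMulVec, evalBilin_Hsq,
    hHN, ← normSq_eq_pairing, normSq_ginvW hhtan, dotProduct_comm ξ N, hξN, hξnorm, hHnorm, hN]
  ring

/-- algebraic content of the Hamiltonian constraint: with
`ξ = ξ∥ − x·N♭`, `H = H∥ − N♭ ∧ h` and
`T := (1/(d−2))·[ξ⊗ξ − (|ξ|²_g/2)·g] + (c/4)·[H² − (|H|²_g/6)·g]`, one has
`T(N,N) = (1/(2(d−2)))(|ξ∥|²_{g_W} + x²) + (c/24)(|H∥|²_{g_W} + 3|h|²_{g_W})`. -/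
theorem hamiltonian_constraint_algebra {d : ℕ} (hd : 3 ≤ d) (c : ℝ)
    (g : Matrix (Fin d) (Fin d) ℝ) (hg : IsLorentzian g) (hdet : IsUnit g.det)
    (N : Fin d → ℝ) (hN : evalBilin g N N = -1)
    (ξ ξpar : Fin d → ℝ) (x : ℝ)
    (hξtan : (∑ μ, N μ * ξpar μ) = 0)
    (hξdec : ξ = ξpar - x • flat g N)
    (H Hpar : Tensor d 3) (h : Tensor d 2)
    (hH : IsAlt H) (hHpar : IsAlt Hpar) (hh : IsAlt h)
    (hHtan : iprod N Hpar = 0) (hhtan : Tangential N h)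
    (hHdec : H = Hpar - wedge1 (flat g N) h) :
    let T : Matrix (Fin d) (Fin d) ℝ :=
      (((d : ℝ) - 2)⁻¹) • (Matrix.vecMulVec ξ ξ - (oneNormSq g⁻¹ ξ / 2) • g)
        + (c / 4) • (Hsq g⁻¹ H - (normSq g⁻¹ H / 6) • g)
    evalBilin T N N =
      (1 / (2 * ((d : ℝ) - 2))) * (oneNormSq (ginvW g N) ξpar + x ^ 2)
        + (c / 24) * (normSq (ginvW g N) Hpar + 3 * normSq (ginvW g N) h) :=
  hamiltonian_constraint_algebra_general c g hg hdet N hN ξ ξpar x hξtan hξdec H Hpar h hH hHpar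
    hHtan hhtan hHdec

end GEE
end

section
/- Let d ≥ 3 and c ∈ ℝ, let ξ be a 1-form and H an alternating 3-form on V with tangential–normal decompositions ξ = ξ∥ − x·N♭ and H = H∥ − N♭ ∧ h (all tangential parts annihilated by i_N, so x = ξ(N)). Define T := (1/(d−2))·[ξ⊗ξ − (|ξ|²_g/2)·g] + (c/4)·[H² − (|H|²_g/6)·g]. Then for every tangential vector X ∈ W: T(N,X) = (1/(d−2))·x·ξ∥(X) + (c/4)·C(h,H∥)(X), where C(h,H∥) is the tangential 1-form with components C_i(h,H∥) = g_W^{kl} g_W^{mn} h_{km} (H∥)_{lni}. (This is the algebraic content of the momentum constraint of the Einstein-frame generalised Einstein equations.) -/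
open scoped BigOperators

namespace GEE

section helpers
variable {M : Type*} [AddCommMonoid M]
variable {ια ιβ ιγ ιδ ιε ιζ : Type*} [Fintype ια] [Fintype ιβ] [Fintype ιγ]
  [Fintype ιδ] [Fintype ιε] [Fintype ιζ]

lemma pull3 (F : ια → ιβ → ιγ → M) :
    (∑ a, ∑ b, ∑ c, F a b c) = ∑ c, ∑ a, ∑ b, F a b c := by
  have h1 : (∑ a, ∑ b, ∑ c, F a b c) = ∑ a, ∑ c, ∑ b, F a b c :=
    Finset.sum_congr rfl fun a _ => Finset.sum_comm
  rw [h1, Finset.sum_comm]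

lemma push3 (F : ια → ιβ → ιγ → M) :
    (∑ a, ∑ b, ∑ c, F a b c) = ∑ b, ∑ c, ∑ a, F a b c :=
  (pull3 fun b c a => F a b c).symm

lemma push4 (F : ια → ιβ → ιγ → ιδ → M) :
    (∑ a, ∑ b, ∑ c, ∑ e, F a b c e) = ∑ b, ∑ c, ∑ e, ∑ a, F a b c e := by
  rw [Finset.sum_comm]
  exact Finset.sum_congr rfl fun b _ => push3 fun a c e => F a b c e

lemma push5 (F : ια → ιβ → ιγ → ιδ → ιε → M) :
    (∑ a, ∑ b, ∑ c, ∑ e, ∑ f, F a b c e f)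
      = ∑ b, ∑ c, ∑ e, ∑ f, ∑ a, F a b c e f := by
  rw [Finset.sum_comm]
  exact Finset.sum_congr rfl fun b _ => push4 fun a c e f => F a b c e f

lemma push6 (F : ια → ιβ → ιγ → ιδ → ιε → ιζ → M) :
    (∑ a, ∑ b, ∑ c, ∑ e, ∑ f, ∑ i, F a b c e f i)
      = ∑ b, ∑ c, ∑ e, ∑ f, ∑ i, ∑ a, F a b c e f i := by
  rw [Finset.sum_comm]
  exact Finset.sum_congr rfl fun b _ => push5 fun a c e f i => F a b c e f i

lemma sum3_split (f : ια → ℝ) (r : ιβ → ιγ → ℝ) :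
    (∑ a, ∑ b, ∑ c, f a * r b c) = (∑ a, f a) * (∑ b, ∑ c, r b c) := by
  have h1 : ∀ a, (∑ b, ∑ c, f a * r b c) = f a * (∑ b, ∑ c, r b c) := by
    intro a; simp only [← Finset.mul_sum]
  rw [Finset.sum_congr rfl fun a _ => h1 a, ← Finset.sum_mul]

lemma sum3_factor (f : ια → ℝ) (r : ιβ → ιγ → ℝ) (hf : (∑ a, f a) = 0) :
    (∑ a, ∑ b, ∑ c, f a * r b c) = 0 := by
  rw [sum3_split, hf, zero_mul]

end helpers

lemma wedge1_three {d : ℕ} (α : Fin d → ℝ) (w : Tensor d 2) (a b c : Fin d) :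
    wedge1 α w ![a,b,c] = α a * w ![b,c] - α b * w ![a,c] + α c * w ![a,b] := by
  have h0 : (![a,b,c] ∘ (0:Fin 3).succAbove) = ![b,c] := by funext j; fin_cases j <;> rfl
  have h1 : (![a,b,c] ∘ (1:Fin 3).succAbove) = ![a,c] := by funext j; fin_cases j <;> rfl
  have h2 : (![a,b,c] ∘ (2:Fin 3).succAbove) = ![a,b] := by funext j; fin_cases j <;> rfl
  have h0p : (![a,b,c] ∘ (Fin.succ : Fin 2 → Fin 3)) = ![b,c] := by
    funext j; fin_cases j <;> rfl
  simp [wedge1, Fin.sum_univ_three, h0, h1, h2, h0p]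
  ring

lemma alt3_cyc {d : ℕ} {ω : Tensor d 3} (hω : IsAlt ω) (a b c : Fin d) :
    ω ![b,c,a] = ω ![a,b,c] := by
  have hc : (![a,b,c] ∘ finRotate 3) = ![b,c,a] := by funext j; fin_cases j <;> rfl
  have := hω ![a,b,c] (finRotate 3)
  rw [hc] at this
  simpa [sign_finRotate] using this


/-- algebraic content of the momentum constraint: with
`ξ = ξ∥ − x·N♭`, `H = H∥ − N♭ ∧ h` and
`T := (1/(d−2))·[ξ⊗ξ − (|ξ|²_g/2)·g] + (c/4)·[H² − (|H|²_g/6)·g]`, for every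
tangential vector `X` one has
`T(N,X) = (1/(d−2))·x·ξ∥(X) + (c/4)·C(h,H∥)(X)`. -/
theorem momentum_constraint_algebra {d : ℕ} (hd : 3 ≤ d) (c : ℝ)
    (g : Matrix (Fin d) (Fin d) ℝ) (hg : IsLorentzian g) (hdet : IsUnit g.det)
    (N : Fin d → ℝ) (hN : evalBilin g N N = -1)
    (ξ ξpar : Fin d → ℝ) (x : ℝ)
    (hξtan : (∑ μ, N μ * ξpar μ) = 0)
    (hξdec : ξ = ξpar - x • flat g N)
    (H Hpar : Tensor d 3) (h : Tensor d 2)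
    (hH : IsAlt H) (hHpar : IsAlt Hpar) (hh : IsAlt h)
    (hHtan : iprod N Hpar = 0) (hhtan : Tangential N h)
    (hHdec : H = Hpar - wedge1 (flat g N) h)
    (X : Fin d → ℝ) (hX : evalBilin g N X = 0) :
    let T : Matrix (Fin d) (Fin d) ℝ :=
      (((d : ℝ) - 2)⁻¹) • (Matrix.vecMulVec ξ ξ - (oneNormSq g⁻¹ ξ / 2) • g)
        + (c / 4) • (Hsq g⁻¹ H - (normSq g⁻¹ H / 6) • g)
    evalBilin T N X =
      (((d : ℝ) - 2)⁻¹) * x * (∑ μ, X μ * ξpar μ)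
        + (c / 4) * ∑ ν, X ν * Ccontr (ginvW g N) h Hpar ν := by
  intro T
  obtain ⟨hgsym, -⟩ := hg
  have hsymm : ∀ i j, g i j = g j i := fun i j => hgsym.apply j i
  have key3 : ∀ κ : Fin d, (∑ l, g⁻¹ κ l * flat g N l) = N κ := by
    intro κ
    have h1 : flat g N = g.mulVec N := rfl
    have h2 : (∑ l, g⁻¹ κ l * flat g N l) = (g⁻¹.mulVec (flat g N)) κ := rfl
    rw [h2, h1, Matrix.mulVec_mulVec, Matrix.nonsing_inv_mul g hdet, Matrix.one_mulVec]
  have sumNNb : (∑ μ, N μ * flat g N μ) = -1 := by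
    have h1 : (∑ μ, N μ * flat g N μ) = ∑ μ, ∑ ν, N μ * g μ ν * N ν := by
      refine Finset.sum_congr rfl fun μ _ => ?_
      rw [flat, Finset.mul_sum]
      exact Finset.sum_congr rfl fun ν _ => by ring
    rw [h1]; exact hN
  have sumXNb : (∑ ν, X ν * flat g N ν) = 0 := by
    have h1 : (∑ ν, X ν * flat g N ν) = ∑ ν, ∑ μ, N μ * g μ ν * X ν := by
      refine Finset.sum_congr rfl fun ν _ => ?_
      rw [flat, Finset.mul_sum]
      exact Finset.sum_congr rfl fun μ _ => by rw [hsymm ν μ]; ring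
    rw [h1, Finset.sum_comm]; exact hX
  have hcontr0 : ∀ b : Fin d, (∑ μ, N μ * h ![μ, b]) = 0 := by
    intro b
    have hupd : ∀ μ : Fin d, Function.update ![b, b] (0:Fin 2) μ = ![μ, b] := by
      intro μ; funext j; fin_cases j <;> simp [Function.update]
    have := hhtan 0 ![b, b]
    simpa [hupd] using this
  have hcontr1 : ∀ a : Fin d, (∑ μ, N μ * h ![a, μ]) = 0 := by
    intro a
    have hupd : ∀ μ : Fin d, Function.update ![a, a] (1:Fin 2) μ = ![a, μ] := by
      intro μ; funext j; fin_cases j <;> simp [Function.update]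
    have := hhtan 1 ![a, a]
    simpa [hupd] using this
  have hPcontr : ∀ a b : Fin d, (∑ μ, N μ * Hpar ![μ, a, b]) = 0 := by
    intro a b
    have := congrFun hHtan ![a, b]
    simpa [iprod] using this
  have keyA : ∀ a b : Fin d, (∑ μ, N μ * H ![μ, a, b]) = h ![a, b] := by
    intro a b
    have hpt : ∀ μ : Fin d, H ![μ,a,b] = Hpar ![μ,a,b]
        - (flat g N μ * h ![a,b] - flat g N a * h ![μ,b] + flat g N b * h ![μ,a]) := by
      intro μ; rw [hHdec]; simp [wedge1_three]
    calc (∑ μ, N μ * H ![μ,a,b])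
        = ∑ μ, (N μ * Hpar ![μ,a,b] - (N μ * flat g N μ) * h ![a,b]
            + flat g N a * (N μ * h ![μ,b]) - flat g N b * (N μ * h ![μ,a])) := by
          refine Finset.sum_congr rfl fun μ _ => ?_
          rw [hpt μ]; ring
      _ = (∑ μ, N μ * Hpar ![μ,a,b]) - (∑ μ, (N μ * flat g N μ) * h ![a,b])
            + (∑ μ, flat g N a * (N μ * h ![μ,b])) - (∑ μ, flat g N b * (N μ * h ![μ,a])) := by
          simp [Finset.sum_add_distrib, Finset.sum_sub_distrib]
      _ = h ![a,b] := by
          rw [hPcontr a b, ← Finset.sum_mul, sumNNb, ← Finset.mul_sum, ← Finset.mul_sum,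
            hcontr0 b, hcontr0 a]
          ring
  have keyXH : ∀ l p : Fin d, (∑ ν, X ν * H ![ν, l, p])
      = (∑ ν, X ν * Hpar ![ν,l,p]) + flat g N l * (∑ ν, X ν * h ![ν,p])
        - flat g N p * (∑ ν, X ν * h ![ν,l]) := by
    intro l p
    have hpt : ∀ ν : Fin d, H ![ν,l,p] = Hpar ![ν,l,p]
        - (flat g N ν * h ![l,p] - flat g N l * h ![ν,p] + flat g N p * h ![ν,l]) := by
      intro ν; rw [hHdec]; simp [wedge1_three]
    calc (∑ ν, X ν * H ![ν,l,p])
        = ∑ ν, (X ν * Hpar ![ν,l,p] - (X ν * flat g N ν) * h ![l,p]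
            + flat g N l * (X ν * h ![ν,p]) - flat g N p * (X ν * h ![ν,l])) := by
          refine Finset.sum_congr rfl fun ν _ => ?_
          rw [hpt ν]; ring
      _ = (∑ ν, X ν * Hpar ![ν,l,p]) - (∑ ν, (X ν * flat g N ν) * h ![l,p])
            + (∑ ν, flat g N l * (X ν * h ![ν,p])) - (∑ ν, flat g N p * (X ν * h ![ν,l])) := by
          simp [Finset.sum_add_distrib, Finset.sum_sub_distrib]
      _ = _ := by
          rw [← Finset.sum_mul, sumXNb, ← Finset.mul_sum, ← Finset.mul_sum]; ring
  -- the H² part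
  have S2 : (∑ μ, ∑ ν, N μ * Hsq g⁻¹ H μ ν * X ν)
      = ∑ ν, X ν * Ccontr (ginvW g N) h Hpar ν := by
    have st1 : (∑ μ, ∑ ν, N μ * Hsq g⁻¹ H μ ν * X ν)
        = ∑ κ, ∑ l, ∑ o, ∑ p,
            g⁻¹ κ l * g⁻¹ o p * h ![κ,o] * (∑ ν, X ν * H ![ν,l,p]) := by
      calc (∑ μ, ∑ ν, N μ * Hsq g⁻¹ H μ ν * X ν)
          = ∑ μ, ∑ ν, ∑ κ, ∑ l, ∑ o, ∑ p,
              N μ * (g⁻¹ κ l * g⁻¹ o p * H ![μ,κ,o] * H ![ν,l,p]) * X ν := by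
            refine Finset.sum_congr rfl fun μ _ => Finset.sum_congr rfl fun ν _ => ?_
            rw [Hsq]
            simp only [Matrix.of_apply, Finset.sum_mul, Finset.mul_sum]
        _ = ∑ ν, ∑ κ, ∑ l, ∑ o, ∑ p, ∑ μ,
              N μ * (g⁻¹ κ l * g⁻¹ o p * H ![μ,κ,o] * H ![ν,l,p]) * X ν := push6 _
        _ = ∑ κ, ∑ l, ∑ o, ∑ p, ∑ ν, ∑ μ,
              N μ * (g⁻¹ κ l * g⁻¹ o p * H ![μ,κ,o] * H ![ν,l,p]) * X ν := push5 _
        _ = ∑ κ, ∑ l, ∑ o, ∑ p,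
              g⁻¹ κ l * g⁻¹ o p * h ![κ,o] * (∑ ν, X ν * H ![ν,l,p]) := by
            refine Finset.sum_congr rfl fun κ _ => Finset.sum_congr rfl fun l _ =>
              Finset.sum_congr rfl fun o _ => Finset.sum_congr rfl fun p _ => ?_
            have e1 : ∀ ν : Fin d, (∑ μ, N μ * (g⁻¹ κ l * g⁻¹ o p * H ![μ,κ,o] * H ![ν,l,p]) * X ν)
                = (X ν * H ![ν,l,p]) * (g⁻¹ κ l * g⁻¹ o p * (∑ μ, N μ * H ![μ,κ,o])) := by
              intro ν
              calc (∑ μ, N μ * (g⁻¹ κ l * g⁻¹ o p * H ![μ,κ,o] * H ![ν,l,p]) * X ν)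
                  = ∑ μ, (N μ * H ![μ,κ,o]) * ((X ν * H ![ν,l,p]) * (g⁻¹ κ l * g⁻¹ o p)) :=
                    Finset.sum_congr rfl fun μ _ => by ring
                _ = (∑ μ, N μ * H ![μ,κ,o]) * ((X ν * H ![ν,l,p]) * (g⁻¹ κ l * g⁻¹ o p)) := by
                    rw [← Finset.sum_mul]
                _ = _ := by ring
            calc (∑ ν, ∑ μ, N μ * (g⁻¹ κ l * g⁻¹ o p * H ![μ,κ,o] * H ![ν,l,p]) * X ν)
                = ∑ ν, (X ν * H ![ν,l,p]) * (g⁻¹ κ l * g⁻¹ o p * (∑ μ, N μ * H ![μ,κ,o])) :=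
                  Finset.sum_congr rfl fun ν _ => e1 ν
              _ = (∑ ν, X ν * H ![ν,l,p]) * (g⁻¹ κ l * g⁻¹ o p * (∑ μ, N μ * H ![μ,κ,o])) := by
                  rw [← Finset.sum_mul]
              _ = _ := by rw [keyA κ o]; ring
    have hB : (∑ κ, ∑ l, ∑ o, ∑ p,
        g⁻¹ κ l * g⁻¹ o p * h ![κ,o] * (flat g N l * (∑ ν, X ν * h ![ν,p]))) = 0 := by
      calc (∑ κ, ∑ l, ∑ o, ∑ p,
              g⁻¹ κ l * g⁻¹ o p * h ![κ,o] * (flat g N l * (∑ ν, X ν * h ![ν,p])))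
          = ∑ κ, ∑ l, ∑ o, ∑ p, (g⁻¹ κ l * flat g N l)
              * (g⁻¹ o p * h ![κ,o] * (∑ ν, X ν * h ![ν,p])) := by
            refine Finset.sum_congr rfl fun κ _ => Finset.sum_congr rfl fun l _ =>
              Finset.sum_congr rfl fun o _ => Finset.sum_congr rfl fun p _ => by ring
        _ = ∑ κ, (∑ l, g⁻¹ κ l * flat g N l)
              * (∑ o, ∑ p, g⁻¹ o p * h ![κ,o] * (∑ ν, X ν * h ![ν,p])) :=
            Finset.sum_congr rfl fun κ _ => sum3_split _ _
        _ = ∑ κ, ∑ o, ∑ p, N κ * (g⁻¹ o p * h ![κ,o] * (∑ ν, X ν * h ![ν,p])) := by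
            refine Finset.sum_congr rfl fun κ _ => ?_
            rw [key3 κ, Finset.mul_sum]
            exact Finset.sum_congr rfl fun o _ => by rw [Finset.mul_sum]
        _ = ∑ o, ∑ p, ∑ κ, N κ * (g⁻¹ o p * h ![κ,o] * (∑ ν, X ν * h ![ν,p])) := push3 _
        _ = 0 := by
            refine Finset.sum_eq_zero fun o _ => Finset.sum_eq_zero fun p _ => ?_
            calc (∑ κ, N κ * (g⁻¹ o p * h ![κ,o] * (∑ ν, X ν * h ![ν,p])))
                = ∑ κ, (N κ * h ![κ,o]) * (g⁻¹ o p * (∑ ν, X ν * h ![ν,p])) :=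
                  Finset.sum_congr rfl fun κ _ => by ring
              _ = (∑ κ, N κ * h ![κ,o]) * (g⁻¹ o p * (∑ ν, X ν * h ![ν,p])) := by
                  rw [← Finset.sum_mul]
              _ = 0 := by rw [hcontr0 o, zero_mul]
    have hC : (∑ κ, ∑ l, ∑ o, ∑ p,
        g⁻¹ κ l * g⁻¹ o p * h ![κ,o] * (flat g N p * (∑ ν, X ν * h ![ν,l]))) = 0 := by
      refine Finset.sum_eq_zero fun κ _ => Finset.sum_eq_zero fun l _ => ?_
      calc (∑ o, ∑ p, g⁻¹ κ l * g⁻¹ o p * h ![κ,o] * (flat g N p * (∑ ν, X ν * h ![ν,l])))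
          = ∑ o, ∑ p, (g⁻¹ o p * flat g N p)
              * (h ![κ,o] * (g⁻¹ κ l * (∑ ν, X ν * h ![ν,l]))) :=
            Finset.sum_congr rfl fun o _ => Finset.sum_congr rfl fun p _ => by ring
        _ = ∑ o, (∑ p, g⁻¹ o p * flat g N p)
              * (h ![κ,o] * (g⁻¹ κ l * (∑ ν, X ν * h ![ν,l]))) := by
            refine Finset.sum_congr rfl fun o _ => ?_
            rw [← Finset.sum_mul]
        _ = ∑ o, (N o * h ![κ,o]) * (g⁻¹ κ l * (∑ ν, X ν * h ![ν,l])) := by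
            refine Finset.sum_congr rfl fun o _ => ?_
            rw [key3 o]; ring
        _ = (∑ o, N o * h ![κ,o]) * (g⁻¹ κ l * (∑ ν, X ν * h ![ν,l])) := by
            rw [← Finset.sum_mul]
        _ = 0 := by rw [hcontr1 κ, zero_mul]
    have hgW : ∀ i j : Fin d, ginvW g N i j = g⁻¹ i j + N i * N j := by
      intro i j
      simp [ginvW, Matrix.add_apply, Matrix.vecMulVec_apply]
    have hRHS : (∑ ν, X ν * Ccontr (ginvW g N) h Hpar ν)
        = ∑ κ, ∑ l, ∑ o, ∑ p,
            g⁻¹ κ l * g⁻¹ o p * h ![κ,o] * (∑ ν, X ν * Hpar ![ν,l,p]) := by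
      calc (∑ ν, X ν * Ccontr (ginvW g N) h Hpar ν)
          = ∑ ν, ∑ k, ∑ l, ∑ m, ∑ n,
              X ν * (ginvW g N k l * ginvW g N m n * h ![k,m] * Hpar ![l,n,ν]) := by
            refine Finset.sum_congr rfl fun ν _ => ?_
            rw [Ccontr]
            simp only [Finset.mul_sum]
        _ = ∑ k, ∑ l, ∑ m, ∑ n, ∑ ν,
              X ν * (ginvW g N k l * ginvW g N m n * h ![k,m] * Hpar ![l,n,ν]) := push5 _
        _ = ∑ k, ∑ l, ∑ m, ∑ n, ∑ ν,
              (g⁻¹ k l * g⁻¹ m n * h ![k,m] * (X ν * Hpar ![ν,l,n])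
               + (N m * h ![k,m]) * (X ν * (g⁻¹ k l * N n * Hpar ![ν,l,n]))
               + ((N k * h ![k,m]) * (X ν * (N l * g⁻¹ m n * Hpar ![ν,l,n]))
               + (N k * h ![k,m]) * (X ν * (N l * N m * N n * Hpar ![ν,l,n])))) := by
            refine Finset.sum_congr rfl fun k _ => Finset.sum_congr rfl fun l _ =>
              Finset.sum_congr rfl fun m _ => Finset.sum_congr rfl fun n _ =>
              Finset.sum_congr rfl fun ν _ => ?_
            rw [hgW k l, hgW m n, alt3_cyc hHpar ν l n]
            ring
        _ = (∑ k, ∑ l, ∑ m, ∑ n, ∑ ν,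
              g⁻¹ k l * g⁻¹ m n * h ![k,m] * (X ν * Hpar ![ν,l,n]))
            + (∑ k, ∑ l, ∑ m, ∑ n, ∑ ν,
              (N m * h ![k,m]) * (X ν * (g⁻¹ k l * N n * Hpar ![ν,l,n])))
            + ((∑ k, ∑ l, ∑ m, ∑ n, ∑ ν,
              (N k * h ![k,m]) * (X ν * (N l * g⁻¹ m n * Hpar ![ν,l,n])))
            + (∑ k, ∑ l, ∑ m, ∑ n, ∑ ν,
              (N k * h ![k,m]) * (X ν * (N l * N m * N n * Hpar ![ν,l,n])))) := by
            simp only [Finset.sum_add_distrib]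
        _ = ∑ κ, ∑ l, ∑ o, ∑ p,
            g⁻¹ κ l * g⁻¹ o p * h ![κ,o] * (∑ ν, X ν * Hpar ![ν,l,p]) := by
            have hT2 : (∑ k : Fin d, ∑ l : Fin d, ∑ m : Fin d, ∑ n : Fin d, ∑ ν : Fin d,
                (N m * h ![k,m]) * (X ν * (g⁻¹ k l * N n * Hpar ![ν,l,n]))) = 0 :=
              Finset.sum_eq_zero fun k _ => Finset.sum_eq_zero fun l _ =>
                sum3_factor _ _ (hcontr1 k)
            have hT3 : (∑ k : Fin d, ∑ l : Fin d, ∑ m : Fin d, ∑ n : Fin d, ∑ ν : Fin d,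
                (N k * h ![k,m]) * (X ν * (N l * g⁻¹ m n * Hpar ![ν,l,n]))) = 0 := by
              rw [push5 fun k l m n ν =>
                (N k * h ![k,m]) * (X ν * (N l * g⁻¹ m n * Hpar ![ν,l,n]))]
              refine Finset.sum_eq_zero fun l _ => Finset.sum_eq_zero fun m _ =>
                Finset.sum_eq_zero fun n _ => Finset.sum_eq_zero fun ν _ => ?_
              rw [← Finset.sum_mul, hcontr0 m, zero_mul]
            have hT4 : (∑ k : Fin d, ∑ l : Fin d, ∑ m : Fin d, ∑ n : Fin d, ∑ ν : Fin d,
                (N k * h ![k,m]) * (X ν * (N l * N m * N n * Hpar ![ν,l,n]))) = 0 := by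
              rw [push5 fun k l m n ν =>
                (N k * h ![k,m]) * (X ν * (N l * N m * N n * Hpar ![ν,l,n]))]
              refine Finset.sum_eq_zero fun l _ => Finset.sum_eq_zero fun m _ =>
                Finset.sum_eq_zero fun n _ => Finset.sum_eq_zero fun ν _ => ?_
              rw [← Finset.sum_mul, hcontr0 m, zero_mul]
            rw [hT2, hT3, hT4]
            have hT1 : (∑ k : Fin d, ∑ l : Fin d, ∑ m : Fin d, ∑ n : Fin d, ∑ ν : Fin d,
                g⁻¹ k l * g⁻¹ m n * h ![k,m] * (X ν * Hpar ![ν,l,n]))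
                = ∑ κ, ∑ l, ∑ o, ∑ p,
                    g⁻¹ κ l * g⁻¹ o p * h ![κ,o] * (∑ ν, X ν * Hpar ![ν,l,p]) := by
              refine Finset.sum_congr rfl fun k _ => Finset.sum_congr rfl fun l _ =>
                Finset.sum_congr rfl fun m _ => Finset.sum_congr rfl fun n _ => ?_
              rw [← Finset.mul_sum]
            rw [hT1]; ring
    calc (∑ μ, ∑ ν, N μ * Hsq g⁻¹ H μ ν * X ν)
        = ∑ κ, ∑ l, ∑ o, ∑ p,
            g⁻¹ κ l * g⁻¹ o p * h ![κ,o] * (∑ ν, X ν * H ![ν,l,p]) := st1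
      _ = ∑ κ, ∑ l, ∑ o, ∑ p,
            (g⁻¹ κ l * g⁻¹ o p * h ![κ,o] * (∑ ν, X ν * Hpar ![ν,l,p])
             + g⁻¹ κ l * g⁻¹ o p * h ![κ,o] * (flat g N l * (∑ ν, X ν * h ![ν,p]))
             - g⁻¹ κ l * g⁻¹ o p * h ![κ,o] * (flat g N p * (∑ ν, X ν * h ![ν,l]))) := by
          refine Finset.sum_congr rfl fun κ _ => Finset.sum_congr rfl fun l _ =>
            Finset.sum_congr rfl fun o _ => Finset.sum_congr rfl fun p _ => ?_
          rw [keyXH l p]; ring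
      _ = (∑ κ, ∑ l, ∑ o, ∑ p,
            g⁻¹ κ l * g⁻¹ o p * h ![κ,o] * (∑ ν, X ν * Hpar ![ν,l,p]))
          + (∑ κ, ∑ l, ∑ o, ∑ p,
            g⁻¹ κ l * g⁻¹ o p * h ![κ,o] * (flat g N l * (∑ ν, X ν * h ![ν,p])))
          - (∑ κ, ∑ l, ∑ o, ∑ p,
            g⁻¹ κ l * g⁻¹ o p * h ![κ,o] * (flat g N p * (∑ ν, X ν * h ![ν,l]))) := by
          simp only [Finset.sum_add_distrib, Finset.sum_sub_distrib]
      _ = ∑ ν, X ν * Ccontr (ginvW g N) h Hpar ν := by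
          rw [hB, hC, hRHS]; ring
  -- the ξ part
  have hNxi : (∑ μ, N μ * ξ μ) = x := by
    have hpt : ∀ μ, ξ μ = ξpar μ - x * flat g N μ := by
      intro μ; rw [hξdec]; simp
    calc (∑ μ, N μ * ξ μ)
        = ∑ μ, (N μ * ξpar μ - x * (N μ * flat g N μ)) := by
          refine Finset.sum_congr rfl fun μ _ => ?_
          rw [hpt μ]; ring
      _ = (∑ μ, N μ * ξpar μ) - x * (∑ μ, N μ * flat g N μ) := by
          rw [Finset.sum_sub_distrib, ← Finset.mul_sum]
      _ = x := by rw [hξtan, sumNNb]; ring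
  have hXxi : (∑ ν, X ν * ξ ν) = ∑ μ, X μ * ξpar μ := by
    have hpt : ∀ μ, ξ μ = ξpar μ - x * flat g N μ := by
      intro μ; rw [hξdec]; simp
    calc (∑ ν, X ν * ξ ν)
        = ∑ ν, (X ν * ξpar ν - x * (X ν * flat g N ν)) := by
          refine Finset.sum_congr rfl fun ν _ => ?_
          rw [hpt ν]; ring
      _ = (∑ ν, X ν * ξpar ν) - x * (∑ ν, X ν * flat g N ν) := by
          rw [Finset.sum_sub_distrib, ← Finset.mul_sum]
      _ = ∑ μ, X μ * ξpar μ := by rw [sumXNb]; ring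
  -- assembly
  show evalBilin ((((d : ℝ) - 2)⁻¹) • (Matrix.vecMulVec ξ ξ - (oneNormSq g⁻¹ ξ / 2) • g)
        + (c / 4) • (Hsq g⁻¹ H - (normSq g⁻¹ H / 6) • g)) N X
    = (((d : ℝ) - 2)⁻¹) * x * (∑ μ, X μ * ξpar μ)
        + (c / 4) * ∑ ν, X ν * Ccontr (ginvW g N) h Hpar ν
  have hentry : ∀ μ ν : Fin d,
      ((((d : ℝ) - 2)⁻¹) • (Matrix.vecMulVec ξ ξ - (oneNormSq g⁻¹ ξ / 2) • g)
        + (c / 4) • (Hsq g⁻¹ H - (normSq g⁻¹ H / 6) • g)) μ ν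
      = (((d : ℝ) - 2)⁻¹) * (ξ μ * ξ ν)
        - ((((d : ℝ) - 2)⁻¹) * (oneNormSq g⁻¹ ξ / 2) + (c / 4) * (normSq g⁻¹ H / 6)) * g μ ν
        + (c / 4) * Hsq g⁻¹ H μ ν := by
    intro μ ν
    simp [Matrix.add_apply, Matrix.smul_apply, Matrix.sub_apply, Matrix.vecMulVec_apply,
      smul_eq_mul]
    ring
  rw [evalBilin]
  calc (∑ μ, ∑ ν, N μ *
        ((((d : ℝ) - 2)⁻¹) • (Matrix.vecMulVec ξ ξ - (oneNormSq g⁻¹ ξ / 2) • g)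
          + (c / 4) • (Hsq g⁻¹ H - (normSq g⁻¹ H / 6) • g)) μ ν * X ν)
      = ∑ μ, ∑ ν, ((((d : ℝ) - 2)⁻¹) * ((N μ * ξ μ) * (X ν * ξ ν))
          - ((((d : ℝ) - 2)⁻¹) * (oneNormSq g⁻¹ ξ / 2) + (c / 4) * (normSq g⁻¹ H / 6))
              * (N μ * g μ ν * X ν)
          + (c / 4) * (N μ * Hsq g⁻¹ H μ ν * X ν)) := by
        refine Finset.sum_congr rfl fun μ _ => Finset.sum_congr rfl fun ν _ => ?_
        rw [hentry μ ν]; ring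
    _ = (((d : ℝ) - 2)⁻¹) * ((∑ μ, N μ * ξ μ) * (∑ ν, X ν * ξ ν))
          - ((((d : ℝ) - 2)⁻¹) * (oneNormSq g⁻¹ ξ / 2) + (c / 4) * (normSq g⁻¹ H / 6))
              * (∑ μ, ∑ ν, N μ * g μ ν * X ν)
          + (c / 4) * (∑ μ, ∑ ν, N μ * Hsq g⁻¹ H μ ν * X ν) := by
        simp only [Finset.sum_add_distrib, Finset.sum_sub_distrib, ← Finset.mul_sum]
        rw [← Finset.sum_mul]
    _ = (((d : ℝ) - 2)⁻¹) * x * (∑ μ, X μ * ξpar μ)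
        + (c / 4) * ∑ ν, X ν * Ccontr (ginvW g N) h Hpar ν := by
        rw [hNxi, hXxi, S2,
          show (∑ μ, ∑ ν, N μ * g μ ν * X ν) = 0 from hX]
        ring


end GEE
end

section
/- (Flat-background energy-momentum conservation.) Let d ≥ 3, κ := 1/(d−2), and let η be the constant Minkowski metric diag(−1,1,…,1) on ℝ^d. Let φ : ℝ^d → ℝ and H : ℝ^d → Λ³(ℝ^d)* be smooth, with H closed (∂_α H_{βγδ} − ∂_β H_{αγδ} + ∂_γ H_{αβδ} − ∂_δ H_{αβγ} = 0), and set ξ := dφ (so ξ_μ = ∂_μ φ). Assume the Einstein-frame H-field equation ∂^μ H_{μνλ} = (4/(d−2))·ξ^μ H_{μνλ} for all ν,λ, and the Einstein-frame dilaton equation ∂^μ∂_μ φ = −(e^{−4κφ}/6)·|H|²_η. Define the energy-momentum tensor T := (1/(d−2))·[ξ⊗ξ − (|ξ|²_η/2)·η] + (e^{−4κφ}/4)·[H² − (|H|²_η/6)·η]. Then T is divergence-free: ∂^μ T_{μν} = 0 for every ν. -/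
open scoped BigOperators

namespace GEE

/-!
Write `T = κ S + (e^{-4κφ}/4) K` with `S = ξ⊗ξ - ½|ξ|² η` and `K = H² - ⅙|H|² η`. Since `η` is
constant, the symmetry of the Hessian gives `∂^μ S_{μν} = (□φ) ξ_ν`. For `K`, contracting
`dH = 0` with `H^{abc}` and using antisymmetry gives `3 H^{abc} ∂_a H_{νbc} = H^{abc} ∂_ν H_{abc}`,
so the term `H^{abc} ∂_a H_{νbc}` of `∂^μ H²_{μν}` cancels against `⅙ ∂_ν|H|²`, leaving
`(∂^μ H_{μαβ}) H_ν^{αβ}`, which the `H`-equation turns into `4κ ξ^μ H²_{μν}`. The derivative of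
the prefactor `e^{-4κφ}` cancels this term and leaves `κ ξ_ν (□φ + e^{-4κφ}|H|²/6)`, which
vanishes by the dilaton equation.
-/

open scoped Matrix

section PartialDerivative

variable {d : ℕ} {f g : (Fin d → ℝ) → ℝ} {x : Fin d → ℝ}

theorem pder_const (c : ℝ) (μ : Fin d) (x : Fin d → ℝ) : pder μ (fun _ => c) x = 0 := by
  simp [pder]

theorem pder_add (hf : DifferentiableAt ℝ f x) (hg : DifferentiableAt ℝ g x) (μ : Fin d) :
    pder μ (fun y => f y + g y) x = pder μ f x + pder μ g x := by
  simp [pder, fderiv_fun_add hf hg]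

theorem pder_sub (hf : DifferentiableAt ℝ f x) (hg : DifferentiableAt ℝ g x) (μ : Fin d) :
    pder μ (fun y => f y - g y) x = pder μ f x - pder μ g x := by
  simp [pder, fderiv_fun_sub hf hg]

theorem pder_neg (μ : Fin d) : pder μ (fun y => -f y) x = -pder μ f x := by
  simp [pder, fderiv_fun_neg]

theorem pder_mul (hf : DifferentiableAt ℝ f x) (hg : DifferentiableAt ℝ g x) (μ : Fin d) :
    pder μ (fun y => f y * g y) x = pder μ f x * g x + f x * pder μ g x := by
  simp only [pder, fderiv_fun_mul hf hg, add_apply, smul_apply, smul_eq_mul]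
  ring

theorem pder_const_mul (c : ℝ) (μ : Fin d) : pder μ (fun y => c * f y) x = c * pder μ f x := by
  simp [pder, show (fun y => c * f y) = c • f from rfl, fderiv_const_smul_field]

theorem pder_mul_const (c : ℝ) (μ : Fin d) : pder μ (fun y => f y * c) x = pder μ f x * c := by
  simp only [mul_comm _ c, pder_const_mul]

theorem pder_div_const (c : ℝ) (μ : Fin d) : pder μ (fun y => f y / c) x = pder μ f x / c := by
  simp only [div_eq_inv_mul, pder_const_mul]

theorem pder_sum {ι : Type*} [Fintype ι] {F : ι → (Fin d → ℝ) → ℝ}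
    (hF : ∀ i, DifferentiableAt ℝ (F i) x) (μ : Fin d) :
    pder μ (fun y => ∑ i, F i y) x = ∑ i, pder μ (F i) x := by
  simp [pder, fderiv_fun_sum fun i _ => hF i]

theorem pder_exp (hf : DifferentiableAt ℝ f x) (μ : Fin d) :
    pder μ (fun y => Real.exp (f y)) x = Real.exp (f x) * pder μ f x := by
  simp [pder, hf.hasFDerivAt.exp.fderiv]

theorem pder_exp_neg_mul (c : ℝ) (hf : DifferentiableAt ℝ f x) (μ : Fin d) :
    pder μ (fun y => Real.exp (-(c * f y))) x = -c * Real.exp (-(c * f x)) * pder μ f x := by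
  rw [pder_exp (by fun_prop), pder_neg, pder_const_mul]
  ring

theorem contDiff_pder {n : WithTop ℕ∞} (hf : ContDiff ℝ (n + 1) f) (μ : Fin d) :
    ContDiff ℝ n fun y => pder μ f y :=
  (hf.fderiv_right le_rfl).clm_apply contDiff_const

theorem pder_comm (hf : ContDiff ℝ 2 f) (a b : Fin d) (x : Fin d → ℝ) :
    pder a (fun y => pder b f y) x = pder b (fun y => pder a f y) x := by
  have hdiff : DifferentiableAt ℝ (fderiv ℝ f) x :=
    ((hf.fderiv_right (m := 1) le_rfl).differentiable one_ne_zero).differentiableAt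
  have hsnd (c : Fin d) (v : Fin d → ℝ) :
      pder c (fun y => fderiv ℝ f y v) x = fderiv ℝ (fderiv ℝ f) x (Pi.single c 1) v := by
    simp [pder, fderiv_clm_apply hdiff (differentiableAt_const v)]
  exact (hsnd a _).trans <| (hf.contDiffAt.isSymmSndFDerivAt (by simp) _ _).trans (hsnd b _).symm

end PartialDerivative

section Sums

variable {d : ℕ}

theorem sum_rotate {α β γ M : Type*} [Fintype α] [Fintype β] [Fintype γ] [AddCommMonoid M]
    (F : α → β → γ → M) : ∑ a, ∑ b, ∑ c, F a b c = ∑ b, ∑ c, ∑ a, F a b c := by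
  rw [Finset.sum_comm]
  exact Finset.sum_congr rfl fun b _ => Finset.sum_comm

theorem sum_fun_fin_three {M : Type*} [AddCommMonoid M] (F : (Fin 3 → Fin d) → M) :
    ∑ v, F v = ∑ a, ∑ b, ∑ c, F ![a, b, c] := by
  let e : (Fin d × Fin d) × Fin d ≃ (Fin 3 → Fin d) :=
    { toFun := fun p => ![p.1.1, p.1.2, p.2]
      invFun := fun v => ((v 0, v 1), v 2)
      left_inv := fun _ => rfl
      right_inv := fun v => by ext i; fin_cases i <;> rfl }
  rw [← e.sum_comp, Fintype.sum_prod_type, Fintype.sum_prod_type]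
  rfl

theorem sum_sum_diagonal_mul (t : Fin d → ℝ) (F : Fin d → Fin d → ℝ) :
    ∑ μ, ∑ σ, Matrix.diagonal t μ σ * F μ σ = ∑ μ, t μ * F μ μ := by
  simp [Matrix.diagonal_apply, ite_mul]

end Sums

section Alternating

variable {d : ℕ}

theorem IsAlt.comp_swap {k : ℕ} {ω : Tensor d k} (hω : IsAlt ω) (v : Fin k → Fin d)
    {i j : Fin k} (hij : i ≠ j) : ω (v ∘ Equiv.swap i j) = -ω v := by
  simp [hω v, Equiv.Perm.sign_swap hij]

theorem IsAlt.apply_swap_fst_snd {ω : Tensor d 3} (hω : IsAlt ω) (a b c : Fin d) :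
    ω ![b, a, c] = -ω ![a, b, c] := by
  convert hω.comp_swap ![a, b, c] (i := 0) (j := 1) (by decide) using 2
  ext k; fin_cases k <;> rfl

theorem IsAlt.apply_swap_snd_thd {ω : Tensor d 3} (hω : IsAlt ω) (a b c : Fin d) :
    ω ![a, c, b] = -ω ![a, b, c] := by
  convert hω.comp_swap ![a, b, c] (i := 1) (j := 2) (by decide) using 2
  ext k; fin_cases k <;> rfl

theorem IsAlt.apply_rotate {ω : Tensor d 3} (hω : IsAlt ω) (a b c : Fin d) :
    ω ![c, a, b] = ω ![a, b, c] := by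
  rw [hω.apply_swap_fst_snd, hω.apply_swap_snd_thd, neg_neg]

theorem IsAlt.prod_mul {k : ℕ} {ω : Tensor d k} (hω : IsAlt ω) (t : Fin d → ℝ) :
    IsAlt fun v => (∏ i, t (v i)) * ω v := by
  intro v σ
  simp only [hω v σ, Function.comp_apply, Equiv.prod_comp σ fun i => t (v i)]
  ring

theorem isAlt_pder {k : ℕ} {H : (Fin d → ℝ) → Tensor d k} (hH : ∀ y, IsAlt (H y)) (a : Fin d)
    (x : Fin d → ℝ) : IsAlt fun v => pder a (fun y => H y v) x := by
  intro v σ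
  simp only [hH _ v σ, pder_const_mul]

theorem three_mul_sum_alt_mul_of_closed {A : Tensor d 3} (hA : IsAlt A) {D : Fin d → Tensor d 3}
    (hD : ∀ a, IsAlt (D a))
    (hclosed : ∀ a b c e, D a ![b, c, e] - D b ![a, c, e] + D c ![a, b, e] - D e ![a, b, c] = 0)
    (ν : Fin d) :
    3 * ∑ a, ∑ b, ∑ c, A ![a, b, c] * D a ![ν, b, c]
      = ∑ a, ∑ b, ∑ c, A ![a, b, c] * D ν ![a, b, c] := by
  have hswap : ∑ a, ∑ b, ∑ c, A ![a, b, c] * D b ![a, ν, c]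
      = ∑ a, ∑ b, ∑ c, A ![a, b, c] * D a ![ν, b, c] := by
    rw [Finset.sum_comm]
    refine Finset.sum_congr rfl fun a _ => Finset.sum_congr rfl fun b _ =>
      Finset.sum_congr rfl fun c _ => ?_
    rw [hA.apply_swap_fst_snd, (hD a).apply_swap_fst_snd, neg_mul_neg]
  have hrotate : ∑ a, ∑ b, ∑ c, A ![a, b, c] * D c ![a, ν, b]
      = -∑ a, ∑ b, ∑ c, A ![a, b, c] * D a ![ν, b, c] := by
    rw [← sum_rotate fun c a b => A ![a, b, c] * D c ![a, ν, b]]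
    simp only [← Finset.sum_neg_distrib]
    refine Finset.sum_congr rfl fun a _ => Finset.sum_congr rfl fun b _ =>
      Finset.sum_congr rfl fun c _ => ?_
    rw [← hA.apply_rotate b c a, (hD a).apply_swap_fst_snd, mul_neg]
  have hcyclic (a b c : Fin d) :
      D a ![ν, b, c] = D ν ![a, b, c] - D b ![a, ν, c] + D c ![a, ν, b] := by
    linarith [hclosed a ν b c]
  simp only [hcyclic, mul_add, mul_sub, Finset.sum_add_distrib, Finset.sum_sub_distrib]
    at hswap hrotate ⊢
  linarith

end Alternating

section Contraction

variable {d : ℕ}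

theorem Hsq_diagonal (t : Fin d → ℝ) (ω : Tensor d 3) (μ ν : Fin d) :
    Hsq (Matrix.diagonal t) ω μ ν = ∑ b, ∑ c, t b * t c * (ω ![μ, b, c] * ω ![ν, b, c]) := by
  simp only [Hsq, Matrix.of_apply, Matrix.diagonal_apply, ite_mul, zero_mul, mul_ite, mul_zero,
    Finset.sum_ite_eq, Finset.sum_ite_irrel, Finset.mem_univ, if_true, Finset.sum_const_zero]
  refine Finset.sum_congr rfl fun b _ => Finset.sum_congr rfl fun c _ => ?_
  ring

theorem normSq_diagonal {k : ℕ} (t : Fin d → ℝ) (ω : Tensor d k) :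
    normSq (Matrix.diagonal t) ω = ∑ v, (∏ i, t (v i)) * (ω v * ω v) := by
  refine Finset.sum_congr rfl fun v _ => ?_
  rw [Finset.sum_eq_single v]
  · simp only [Matrix.diagonal_apply_eq]
    ring
  · intro w _ hwv
    obtain ⟨i, hi⟩ := Function.ne_iff.mp hwv
    rw [Finset.prod_eq_zero (Finset.mem_univ i) (Matrix.diagonal_apply_ne t (Ne.symm hi))]
    ring
  · simp

theorem mulVec_vecMul_of_transpose_mul_eq_one {ginv g : Matrix (Fin d) (Fin d) ℝ}
    (h : ginvᵀ * g = 1) (a : Fin d → ℝ) : (ginv *ᵥ a) ᵥ* g = a := by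
  rw [← Matrix.transpose_transpose ginv, Matrix.mulVec_transpose, Matrix.vecMul_vecMul, h,
    Matrix.vecMul_one]

end Contraction

section Divergence

variable {d : ℕ}

noncomputable def divergence (ginv : Matrix (Fin d) (Fin d) ℝ)
    (T : (Fin d → ℝ) → Matrix (Fin d) (Fin d) ℝ) (x : Fin d → ℝ) (ν : Fin d) : ℝ :=
  ∑ μ, ∑ σ, ginv μ σ * pder σ (fun y => T y μ ν) x

variable {ginv g : Matrix (Fin d) (Fin d) ℝ} {T S : (Fin d → ℝ) → Matrix (Fin d) (Fin d) ℝ}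
  {f : (Fin d → ℝ) → ℝ} {x : Fin d → ℝ}

theorem divergence_add (hT : ∀ μ ν, DifferentiableAt ℝ (fun y => T y μ ν) x)
    (hS : ∀ μ ν, DifferentiableAt ℝ (fun y => S y μ ν) x) (ν : Fin d) :
    divergence ginv (fun y => T y + S y) x ν = divergence ginv T x ν + divergence ginv S x ν := by
  simp only [divergence, Matrix.add_apply, pder_add (hT _ _) (hS _ _), mul_add,
    Finset.sum_add_distrib]

theorem divergence_sub (hT : ∀ μ ν, DifferentiableAt ℝ (fun y => T y μ ν) x)
    (hS : ∀ μ ν, DifferentiableAt ℝ (fun y => S y μ ν) x) (ν : Fin d) :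
    divergence ginv (fun y => T y - S y) x ν = divergence ginv T x ν - divergence ginv S x ν := by
  simp only [divergence, Matrix.sub_apply, pder_sub (hT _ _) (hS _ _), mul_sub,
    Finset.sum_sub_distrib]

theorem divergence_const_smul (c : ℝ) (T : (Fin d → ℝ) → Matrix (Fin d) (Fin d) ℝ)
    (x : Fin d → ℝ) (ν : Fin d) :
    divergence ginv (fun y => c • T y) x ν = c * divergence ginv T x ν := by
  simp only [divergence, Matrix.smul_apply, smul_eq_mul, pder_const_mul, Finset.mul_sum]
  exact Finset.sum_congr rfl fun μ _ => Finset.sum_congr rfl fun σ _ => by ring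

theorem divergence_smul (hf : DifferentiableAt ℝ f x)
    (hT : ∀ μ ν, DifferentiableAt ℝ (fun y => T y μ ν) x) (ν : Fin d) :
    divergence ginv (fun y => f y • T y) x ν
      = f x * divergence ginv T x ν + ((ginv *ᵥ fun σ => pder σ f x) ᵥ* T x) ν := by
  simp only [divergence, Matrix.smul_apply, smul_eq_mul, pder_mul hf (hT _ _), Matrix.vecMul,
    Matrix.mulVec, dotProduct, Finset.mul_sum, Finset.sum_mul, mul_add, Finset.sum_add_distrib]
  rw [add_comm]
  congr 1 <;> exact Finset.sum_congr rfl fun μ _ => Finset.sum_congr rfl fun σ _ => by ring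

theorem divergence_smul_const (f : (Fin d → ℝ) → ℝ) (A : Matrix (Fin d) (Fin d) ℝ)
    (x : Fin d → ℝ) (ν : Fin d) :
    divergence ginv (fun y => f y • A) x ν = ((ginv *ᵥ fun σ => pder σ f x) ᵥ* A) ν := by
  simp only [divergence, Matrix.smul_apply, smul_eq_mul, pder_mul_const, Matrix.vecMul,
    Matrix.mulVec, dotProduct, Finset.sum_mul]
  exact Finset.sum_congr rfl fun μ _ => Finset.sum_congr rfl fun σ _ => by ring

theorem divergence_smul_metric (h : ginvᵀ * g = 1) (f : (Fin d → ℝ) → ℝ) (x : Fin d → ℝ)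
    (ν : Fin d) : divergence ginv (fun y => f y • g) x ν = pder ν f x := by
  rw [divergence_smul_const, mulVec_vecMul_of_transpose_mul_eq_one h]

theorem divergence_vecMulVec {u w : (Fin d → ℝ) → Fin d → ℝ}
    (hu : ∀ μ, DifferentiableAt ℝ (fun y => u y μ) x)
    (hw : ∀ ν, DifferentiableAt ℝ (fun y => w y ν) x) (ν : Fin d) :
    divergence ginv (fun y => Matrix.vecMulVec (u y) (w y)) x ν
      = (∑ μ, ∑ σ, ginv μ σ * pder σ (fun y => u y μ) x) * w x ν
        + ∑ μ, ∑ σ, ginv μ σ * u x μ * pder σ (fun y => w y ν) x := by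
  simp only [divergence, Matrix.vecMulVec_apply, pder_mul (hu _) (hw _), mul_add,
    Finset.sum_add_distrib, Finset.sum_mul]
  congr 1 <;> exact Finset.sum_congr rfl fun μ _ => Finset.sum_congr rfl fun σ _ => by ring

end Divergence

section DilatonStress

variable {d : ℕ} {ginv g : Matrix (Fin d) (Fin d) ℝ} {x : Fin d → ℝ}

theorem pder_oneNormSq (hsymm : ginv.IsSymm) {α : (Fin d → ℝ) → Fin d → ℝ}
    (hα : ∀ a, DifferentiableAt ℝ (fun y => α y a) x) (ν : Fin d) :
    pder ν (fun y => oneNormSq ginv (α y)) x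
      = 2 * ∑ μ, ∑ σ, ginv μ σ * α x μ * pder ν (fun y => α y σ) x := by
  have hswap : ∑ μ, ∑ σ, ginv μ σ * pder ν (fun y => α y μ) x * α x σ
      = ∑ μ, ∑ σ, ginv μ σ * α x μ * pder ν (fun y => α y σ) x := by
    rw [Finset.sum_comm]
    exact Finset.sum_congr rfl fun μ _ => Finset.sum_congr rfl fun σ _ => by
      rw [hsymm.apply]; ring
  unfold oneNormSq
  simp (disch := fun_prop) only [pder_sum, pder_mul, pder_const, zero_mul, zero_add,
    Finset.sum_add_distrib, hswap]
  ring

noncomputable def dilatonStress (ginv g : Matrix (Fin d) (Fin d) ℝ) (φ : (Fin d → ℝ) → ℝ)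
    (y : Fin d → ℝ) : Matrix (Fin d) (Fin d) ℝ :=
  Matrix.vecMulVec (fun a => pder a φ y) (fun a => pder a φ y)
    - (oneNormSq ginv (fun a => pder a φ y) / 2) • g

theorem differentiableAt_dilatonStress {φ : (Fin d → ℝ) → ℝ} (hφ : ContDiff ℝ 2 φ)
    (μ ν : Fin d) :
    DifferentiableAt ℝ (fun y => dilatonStress ginv g φ y μ ν) x := by
  have hξ (a : Fin d) : Differentiable ℝ fun y => pder a φ y :=
    (contDiff_pder hφ a).differentiable one_ne_zero
  simp only [dilatonStress, oneNormSq, Matrix.sub_apply, Matrix.smul_apply,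
    Matrix.vecMulVec_apply, smul_eq_mul]
  fun_prop

theorem divergence_dilatonStress {φ : (Fin d → ℝ) → ℝ} (hφ : ContDiff ℝ 2 φ)
    (hsymm : ginv.IsSymm) (hinv : ginv * g = 1) (x : Fin d → ℝ) (ν : Fin d) :
    divergence ginv (dilatonStress ginv g φ) x ν
      = (∑ μ, ∑ σ, ginv μ σ * pder σ (fun y => pder μ φ y) x) * pder ν φ x := by
  have hξ (a : Fin d) : Differentiable ℝ fun y => pder a φ y :=
    (contDiff_pder hφ a).differentiable one_ne_zero
  have hsq (μ ν : Fin d) : DifferentiableAt ℝ (fun y => Matrix.vecMulVec (fun a => pder a φ y)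
      (fun a => pder a φ y) μ ν) x := by
    simp only [Matrix.vecMulVec_apply]; fun_prop
  have hnorm (μ ν : Fin d) : DifferentiableAt ℝ
      (fun y => ((oneNormSq ginv (fun a => pder a φ y) / 2) • g) μ ν) x := by
    simp only [oneNormSq, Matrix.smul_apply, smul_eq_mul]; fun_prop
  unfold dilatonStress
  rw [divergence_sub hsq hnorm, divergence_vecMulVec (fun a => (hξ a).differentiableAt)
    (fun a => (hξ a).differentiableAt), divergence_smul_metric (by rw [hsymm.eq, hinv]),
    pder_div_const, pder_oneNormSq hsymm (fun a => (hξ a).differentiableAt)]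
  simp only [pder_comm hφ ν]
  ring

end DilatonStress

section FluxStress

variable {d : ℕ} {ginv g : Matrix (Fin d) (Fin d) ℝ} {x : Fin d → ℝ}

noncomputable def fluxStress (ginv g : Matrix (Fin d) (Fin d) ℝ) (ω : Tensor d 3) :
    Matrix (Fin d) (Fin d) ℝ :=
  Hsq ginv ω - (normSq ginv ω / 6) • g

theorem differentiableAt_fluxStress {H : (Fin d → ℝ) → Tensor d 3}
    (hH : ∀ v, DifferentiableAt ℝ (fun y => H y v) x) (μ ν : Fin d) :
    DifferentiableAt ℝ (fun y => fluxStress ginv g (H y) μ ν) x := by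
  simp only [fluxStress, Hsq, normSq, Matrix.sub_apply, Matrix.smul_apply, Matrix.of_apply,
    smul_eq_mul]
  fun_prop

theorem divergence_Hsq_diagonal (t : Fin d → ℝ) {H : (Fin d → ℝ) → Tensor d 3}
    (hH : ∀ v, DifferentiableAt ℝ (fun y => H y v) x) (ν : Fin d) :
    divergence (Matrix.diagonal t) (fun y => Hsq (Matrix.diagonal t) (H y)) x ν
      = ∑ b, ∑ c, t b * t c * (∑ μ, t μ * pder μ (fun y => H y ![μ, b, c]) x) * H x ![ν, b, c]
        + ∑ a, ∑ b, ∑ c,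
            t a * t b * t c * H x ![a, b, c] * pder a (fun y => H y ![ν, b, c]) x := by
  simp only [divergence, sum_sum_diagonal_mul, Hsq_diagonal]
  simp (disch := fun_prop) only [pder_sum, pder_const_mul, pder_mul, mul_add, Finset.mul_sum,
    Finset.sum_mul, Finset.sum_add_distrib]
  rw [sum_rotate]
  congr 1 <;> refine Finset.sum_congr rfl fun _ _ => Finset.sum_congr rfl fun _ _ =>
    Finset.sum_congr rfl fun _ _ => by ring

theorem pder_normSq_diagonal (t : Fin d → ℝ) {H : (Fin d → ℝ) → Tensor d 3}
    (hH : ∀ v, DifferentiableAt ℝ (fun y => H y v) x) (ν : Fin d) :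
    pder ν (fun y => normSq (Matrix.diagonal t) (H y)) x
      = 2 * ∑ a, ∑ b, ∑ c,
          t a * t b * t c * H x ![a, b, c] * pder ν (fun y => H y ![a, b, c]) x := by
  simp only [normSq_diagonal, sum_fun_fin_three]
  simp (disch := fun_prop) only [pder_sum, pder_const_mul, pder_mul, Finset.mul_sum]
  refine Finset.sum_congr rfl fun a _ => Finset.sum_congr rfl fun b _ =>
    Finset.sum_congr rfl fun c _ => ?_
  simp only [Fin.prod_univ_three, Matrix.cons_val_zero, Matrix.cons_val_one, Matrix.cons_val_two,
    Matrix.head_cons, Matrix.tail_cons]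
  ring

theorem divergence_fluxStress (hdiag : ginv.IsDiag) (hinv : ginv * g = 1)
    {H : (Fin d → ℝ) → Tensor d 3} (hH : ∀ v, DifferentiableAt ℝ (fun y => H y v) x)
    (halt : ∀ y, IsAlt (H y))
    (hclosed : ∀ a b c e : Fin d,
      pder a (fun y => H y ![b, c, e]) x - pder b (fun y => H y ![a, c, e]) x
        + pder c (fun y => H y ![a, b, e]) x - pder e (fun y => H y ![a, b, c]) x = 0)
    (α : Fin d → ℝ)
    (hdivH : ∀ b c, ∑ μ, ∑ σ, ginv μ σ * pder σ (fun y => H y ![μ, b, c]) x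
      = ∑ μ, (ginv *ᵥ α) μ * H x ![μ, b, c]) (ν : Fin d) :
    divergence ginv (fun y => fluxStress ginv g (H y)) x ν
      = ((ginv *ᵥ α) ᵥ* Hsq ginv (H x)) ν := by
  obtain ⟨t, rfl⟩ : ∃ t, ginv = Matrix.diagonal t := ⟨_, hdiag.diagonal_diag.symm⟩
  have hdivH' (b c : Fin d) :
      ∑ μ, t μ * pder μ (fun y => H y ![μ, b, c]) x = ∑ μ, t μ * α μ * H x ![μ, b, c] := by
    simpa [sum_sum_diagonal_mul, Matrix.mulVec_diagonal, mul_assoc] using hdivH b c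
  have hαHsq : ((Matrix.diagonal t *ᵥ α) ᵥ* Hsq (Matrix.diagonal t) (H x)) ν
      = ∑ b, ∑ c, t b * t c * (∑ μ, t μ * α μ * H x ![μ, b, c]) * H x ![ν, b, c] := by
    simp only [Matrix.vecMul, dotProduct, Matrix.mulVec_diagonal, Hsq_diagonal, Finset.mul_sum,
      Finset.sum_mul]
    rw [sum_rotate]
    exact Finset.sum_congr rfl fun _ _ => Finset.sum_congr rfl fun _ _ =>
      Finset.sum_congr rfl fun _ _ => by ring
  have hcl := three_mul_sum_alt_mul_of_closed ((halt x).prod_mul t) (isAlt_pder halt · x)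
    hclosed ν
  simp only [Fin.prod_univ_three, Matrix.cons_val_zero, Matrix.cons_val_one,
    Matrix.cons_val_two, Matrix.head_cons, Matrix.tail_cons] at hcl
  have hHsqD (μ ν : Fin d) :
      DifferentiableAt ℝ (fun y => Hsq (Matrix.diagonal t) (H y) μ ν) x := by
    simp only [Hsq, Matrix.of_apply]; fun_prop
  have hnormD (μ ν : Fin d) : DifferentiableAt ℝ
      (fun y => ((normSq (Matrix.diagonal t) (H y) / 6) • g) μ ν) x := by
    simp only [normSq, Matrix.smul_apply, smul_eq_mul]; fun_prop
  unfold fluxStress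
  rw [divergence_sub hHsqD hnormD,
    divergence_smul_metric (by rw [Matrix.diagonal_transpose, hinv]), pder_div_const,
    divergence_Hsq_diagonal t hH, pder_normSq_diagonal t hH, hαHsq]
  simp only [hdivH']
  linarith

end FluxStress

section EnergyMomentum

variable {d : ℕ} {ginv g : Matrix (Fin d) (Fin d) ℝ} {x : Fin d → ℝ}

theorem divergence_energyMomentum_eq_zero (hdiag : ginv.IsDiag) (hinv : ginv * g = 1) (κ : ℝ)
    {φ : (Fin d → ℝ) → ℝ} (hφ : ContDiff ℝ 2 φ) {H : (Fin d → ℝ) → Tensor d 3}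
    (hH : ∀ v, DifferentiableAt ℝ (fun y => H y v) x) (halt : ∀ y, IsAlt (H y))
    (hclosed : ∀ a b c e : Fin d,
      pder a (fun y => H y ![b, c, e]) x - pder b (fun y => H y ![a, c, e]) x
        + pder c (fun y => H y ![a, b, e]) x - pder e (fun y => H y ![a, b, c]) x = 0)
    (hHeq : ∀ b c, ∑ μ, ∑ σ, ginv μ σ * pder σ (fun y => H y ![μ, b, c]) x
      = 4 * κ * ∑ μ, ∑ σ, ginv μ σ * pder σ φ x * H x ![μ, b, c])
    (hdil : ∑ μ, ∑ σ, ginv μ σ * pder σ (fun y => pder μ φ y) x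
      = -(Real.exp (-(4 * κ * φ x)) / 6) * normSq ginv (H x)) (ν : Fin d) :
    divergence ginv (fun y => κ • dilatonStress ginv g φ y
      + (Real.exp (-(4 * κ * φ y)) / 4) • fluxStress ginv g (H y)) x ν = 0 := by
  set ξ : Fin d → ℝ := fun σ => pder σ φ x
  have hφx : DifferentiableAt ℝ φ x := (hφ.differentiable two_ne_zero).differentiableAt
  have hexp : DifferentiableAt ℝ (fun y => Real.exp (-(4 * κ * φ y)) / 4) x := by fun_prop
  have hgrad_exp : (fun σ => pder σ (fun y => Real.exp (-(4 * κ * φ y)) / 4) x)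
      = (-κ * Real.exp (-(4 * κ * φ x))) • ξ := by
    ext σ
    simp only [pder_div_const, pder_exp_neg_mul _ hφx, Pi.smul_apply, smul_eq_mul, ξ]
    ring
  have hdivH (b c : Fin d) : ∑ μ, ∑ σ, ginv μ σ * pder σ (fun y => H y ![μ, b, c]) x
      = ∑ μ, (ginv *ᵥ (4 * κ) • ξ) μ * H x ![μ, b, c] := by
    simp only [hHeq, Pi.smul_apply, smul_eq_mul, Matrix.mulVec, dotProduct, Finset.mul_sum,
      Finset.sum_mul, ξ]
    exact Finset.sum_congr rfl fun μ _ => Finset.sum_congr rfl fun σ _ => by ring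
  have hS (μ ν : Fin d) : DifferentiableAt ℝ (fun y => (κ • dilatonStress ginv g φ y) μ ν) x :=
    (differentiableAt_dilatonStress hφ μ ν).const_mul κ
  have hK (μ ν : Fin d) : DifferentiableAt ℝ
      (fun y => ((Real.exp (-(4 * κ * φ y)) / 4) • fluxStress ginv g (H y)) μ ν) x :=
    hexp.mul (differentiableAt_fluxStress hH μ ν)
  rw [divergence_add hS hK, divergence_const_smul,
    divergence_smul hexp (differentiableAt_fluxStress hH), hgrad_exp,
    divergence_dilatonStress hφ hdiag.isSymm hinv, hdil,
    divergence_fluxStress hdiag hinv hH halt hclosed _ hdivH]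
  simp only [fluxStress, Matrix.mulVec_smul, Matrix.smul_vecMul, Matrix.vecMul_sub,
    Matrix.vecMul_smul, mulVec_vecMul_of_transpose_mul_eq_one (by rw [hdiag.isSymm.eq, hinv]),
    Pi.sub_apply, Pi.smul_apply, smul_eq_mul]
  ring

end EnergyMomentum

theorem mink_mul_mink (d : ℕ) : mink d * mink d = 1 := by
  rw [mink, Matrix.diagonal_mul_diagonal, ← Matrix.diagonal_one]
  congr 1
  ext i
  split_ifs <;> norm_num

theorem inv_mink (d : ℕ) : (mink d)⁻¹ = mink d :=
  Matrix.inv_eq_right_inv (mink_mul_mink d)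

theorem flat_energy_momentum_conservation_general {d : ℕ}
    (φ : (Fin d → ℝ) → ℝ) (hφ : ContDiff ℝ (⊤ : ℕ∞) φ)
    (H : (Fin d → ℝ) → Tensor d 3)
    (hHsmooth : ∀ v : Fin 3 → Fin d, ContDiff ℝ (⊤ : ℕ∞) fun x => H x v)
    (halt : ∀ x, IsAlt (H x))
    (hclosed : ∀ (x : Fin d → ℝ) (a b c e : Fin d),
      pder a (fun y => H y ![b, c, e]) x - pder b (fun y => H y ![a, c, e]) x
        + pder c (fun y => H y ![a, b, e]) x - pder e (fun y => H y ![a, b, c]) x = 0)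
    -- the Einstein-frame H-field equation `∂^μ H_{μνλ} = (4/(d−2))·ξ^μ H_{μνλ}`:
    (hHeq : ∀ (x : Fin d → ℝ) (ν l : Fin d),
      (∑ μ, ∑ σ, (mink d)⁻¹ μ σ * pder σ (fun y => H y ![μ, ν, l]) x)
        = (4 / ((d : ℝ) - 2)) * ∑ μ, ∑ σ, (mink d)⁻¹ μ σ * pder σ φ x * H x ![μ, ν, l])
    -- the Einstein-frame dilaton equation `∂^μ∂_μ φ = −(e^{−4κφ}/6)·|H|²_η`:
    (hdil : ∀ x : Fin d → ℝ,
      (∑ μ, ∑ σ, (mink d)⁻¹ μ σ * pder σ (fun y => pder μ φ y) x)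
        = -(Real.exp (-(4 * ((d : ℝ) - 2)⁻¹ * φ x)) / 6) * normSq (mink d)⁻¹ (H x)) :
    -- conclusion: `∂^μ T_{μν} = 0`
    let T : (Fin d → ℝ) → Matrix (Fin d) (Fin d) ℝ := fun y =>
      (((d : ℝ) - 2)⁻¹) •
          (Matrix.vecMulVec (fun a => pder a φ y) (fun a => pder a φ y)
            - (oneNormSq (mink d)⁻¹ (fun a => pder a φ y) / 2) • mink d)
        + (Real.exp (-(4 * ((d : ℝ) - 2)⁻¹ * φ y)) / 4) •
            (Hsq (mink d)⁻¹ (H y) - (normSq (mink d)⁻¹ (H y) / 6) • mink d)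
    ∀ (x : Fin d → ℝ) (ν : Fin d),
      (∑ μ, ∑ σ, (mink d)⁻¹ μ σ * pder σ (fun y => T y μ ν) x) = 0 := by
  intro T x ν
  have hinv : (mink d)⁻¹ * mink d = 1 := by rw [inv_mink, mink_mul_mink]
  have hdiag : ((mink d)⁻¹).IsDiag := by rw [inv_mink]; exact Matrix.isDiag_diagonal _
  exact divergence_energyMomentum_eq_zero hdiag hinv _ (hφ.of_le (WithTop.coe_le_coe.mpr le_top))
    (fun v => ((hHsmooth v).differentiable (by simp)).differentiableAt) halt (hclosed x)
    (fun b c => by rw [hHeq x b c, div_eq_mul_inv]) (hdil x) ν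

/-- flat-background energy-momentum conservation: on `ℝ^d`
(`d ≥ 3`, `κ := 1/(d−2)`) with the constant Minkowski metric
`η = diag(−1,1,…,1)`, let `φ` be a smooth scalar field, `H` a smooth closed
field of alternating 3-forms, and `ξ := dφ` (so `ξ_μ = ∂_μ φ`).  Assume the
Einstein-frame `H`-field equation `∂^μ H_{μνλ} = (4/(d−2))·ξ^μ H_{μνλ}` and the
Einstein-frame dilaton equation `∂^μ∂_μ φ = −(e^{−4κφ}/6)·|H|²_η`.  Then the
energy-momentum tensor
`T := (1/(d−2))·[ξ⊗ξ − (|ξ|²_η/2)·η] + (e^{−4κφ}/4)·[H² − (|H|²_η/6)·η]`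
is divergence-free: `∂^μ T_{μν} = 0` for every `ν`. -/
theorem flat_energy_momentum_conservation {d : ℕ} (hd : 3 ≤ d)
    (φ : (Fin d → ℝ) → ℝ) (hφ : ContDiff ℝ (⊤ : ℕ∞) φ)
    (H : (Fin d → ℝ) → Tensor d 3)
    (hHsmooth : ∀ v : Fin 3 → Fin d, ContDiff ℝ (⊤ : ℕ∞) fun x => H x v)
    (halt : ∀ x, IsAlt (H x))
    (hclosed : ∀ (x : Fin d → ℝ) (a b c e : Fin d),
      pder a (fun y => H y ![b, c, e]) x - pder b (fun y => H y ![a, c, e]) x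
        + pder c (fun y => H y ![a, b, e]) x - pder e (fun y => H y ![a, b, c]) x = 0)
    -- the Einstein-frame H-field equation `∂^μ H_{μνλ} = (4/(d−2))·ξ^μ H_{μνλ}`:
    (hHeq : ∀ (x : Fin d → ℝ) (ν l : Fin d),
      (∑ μ, ∑ σ, (mink d)⁻¹ μ σ * pder σ (fun y => H y ![μ, ν, l]) x)
        = (4 / ((d : ℝ) - 2)) * ∑ μ, ∑ σ, (mink d)⁻¹ μ σ * pder σ φ x * H x ![μ, ν, l])
    -- the Einstein-frame dilaton equation `∂^μ∂_μ φ = −(e^{−4κφ}/6)·|H|²_η`: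
    (hdil : ∀ x : Fin d → ℝ,
      (∑ μ, ∑ σ, (mink d)⁻¹ μ σ * pder σ (fun y => pder μ φ y) x)
        = -(Real.exp (-(4 * ((d : ℝ) - 2)⁻¹ * φ x)) / 6) * normSq (mink d)⁻¹ (H x)) :
    -- conclusion: `∂^μ T_{μν} = 0`
    let T : (Fin d → ℝ) → Matrix (Fin d) (Fin d) ℝ := fun y =>
      (((d : ℝ) - 2)⁻¹) •
          (Matrix.vecMulVec (fun a => pder a φ y) (fun a => pder a φ y)
            - (oneNormSq (mink d)⁻¹ (fun a => pder a φ y) / 2) • mink d)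
        + (Real.exp (-(4 * ((d : ℝ) - 2)⁻¹ * φ y)) / 4) •
            (Hsq (mink d)⁻¹ (H y) - (normSq (mink d)⁻¹ (H y) / 6) • mink d)
    ∀ (x : Fin d → ℝ) (ν : Fin d),
      (∑ μ, ∑ σ, (mink d)⁻¹ μ σ * pder σ (fun y => T y μ ν) x) = 0 :=
  flat_energy_momentum_conservation_general φ hφ H hHsmooth halt hclosed hHeq hdil

end GEE
end
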